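/- arXiv:2408.09214 — 7 statements merged into one kernel-verified Lean document; each statement's English description precedes it below -/
import Mathlib

section
/- Let n ≥ 1 and let p be an odd prime with p ∤ n. Then the total number of subgroups of the direct product group T_{4n} × C_p equals 2·(τ(2n) + σ(n)). -/
open AddSubgroup QuaternionGroup

lemma dvd_mod_iff' {k a m : ℕ} (h : k ∣ m) : k ∣ a % m ↔ k ∣ a := by
  have key := Nat.mod_add_div a m
  constructor
  · intro h2
    have h4 : k ∣ a % m + m * (a / m) := dvd_add h2 (h.mul_right _)
    rwa [key] at h4
  · intro h2
    have h3 : a % m = a - m * (a / m) := by omega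
    rw [h3]
    exact Nat.dvd_sub h2 (h.mul_right _)

section zmod
variable {m : ℕ} [NeZero m]

lemma mem_zmultiples_natCast_iff {d : ℕ} (hd : d ∣ m) (x : ZMod m) :
    x ∈ zmultiples ((d : ZMod m)) ↔ d ∣ x.val := by
  constructor
  · rintro ⟨z, rfl⟩
    simp only [zsmul_eq_mul]
    rw [ZMod.val_mul, dvd_mod_iff' hd]
    refine Dvd.dvd.mul_left ?_ _
    rw [ZMod.val_natCast, dvd_mod_iff' hd]
  · rintro ⟨c, hc⟩
    refine ⟨(c : ℤ), ?_⟩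
    show (c : ℤ) • ((d : ZMod m)) = x
    have h5 : ((x.val : ℕ) : ZMod m) = x := ZMod.natCast_rightInverse x
    rw [zsmul_eq_mul, ← h5, hc]
    push_cast
    ring

lemma addSubgroup_eq_zmultiples (H : AddSubgroup (ZMod m)) :
    ∃ d : ℕ, d ∈ m.divisors ∧ H = zmultiples ((d : ZMod m)) := by
  obtain ⟨g, hg⟩ : ∃ g : ZMod m, H = zmultiples g := by
    obtain ⟨⟨x, hx⟩, hgen⟩ := (inferInstance : IsAddCyclic H).exists_zsmul_surjective
    refine ⟨x, le_antisymm ?_ (zmultiples_le.mpr hx)⟩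
    intro y hy
    obtain ⟨z, hz⟩ := hgen ⟨y, hy⟩
    exact ⟨z, congrArg Subtype.val hz⟩
  refine ⟨Nat.gcd g.val m, Nat.mem_divisors.mpr ⟨Nat.gcd_dvd_right _ _, NeZero.ne m⟩, ?_⟩
  rw [hg]
  apply le_antisymm
  · apply zmultiples_le.mpr
    rw [mem_zmultiples_natCast_iff (Nat.gcd_dvd_right _ _)]
    exact Nat.gcd_dvd_left _ _
  · apply zmultiples_le.mpr
    have key := Nat.gcd_eq_gcd_ab g.val m
    refine ⟨Nat.gcdA g.val m, ?_⟩
    show (Nat.gcdA g.val m) • g = _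
    have h5 : ((g.val : ℕ) : ZMod m) = g := ZMod.natCast_rightInverse g
    calc (Nat.gcdA g.val m) • g = ((Nat.gcdA g.val m : ℤ) : ZMod m) * g := by
          rw [zsmul_eq_mul]
      _ = ((g.val * Nat.gcdA g.val m + m * Nat.gcdB g.val m : ℤ) : ZMod m) := by
          push_cast
          rw [h5]
          rw [ZMod.natCast_self]
          ring
      _ = ((Nat.gcd g.val m : ℤ) : ZMod m) := by rw [← key]
      _ = _ := by push_cast; ring

lemma card_addSubgroup_zmod : Nat.card (AddSubgroup (ZMod m)) = m.divisors.card := by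
  have hbij : Function.Bijective
      (fun d : {d : ℕ // d ∈ m.divisors} => zmultiples ((d : ZMod m))) := by
    constructor
    · rintro ⟨d1, hd1⟩ ⟨d2, hd2⟩ h
      simp only at h
      have hdvd : ∀ d1 d2 : ℕ, d1 ∈ m.divisors → d2 ∈ m.divisors →
          zmultiples ((d1 : ZMod m)) = zmultiples ((d2 : ZMod m)) → d2 ∣ d1 := by
        intro d1 d2 hd1 hd2 h
        have h1 : (d1 : ZMod m) ∈ zmultiples ((d2 : ZMod m)) := by
          rw [← h]; exact mem_zmultiples _
        rw [mem_zmultiples_natCast_iff (Nat.mem_divisors.mp hd2).1, ZMod.val_natCast,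
          dvd_mod_iff' (Nat.mem_divisors.mp hd2).1] at h1
        exact h1
      exact Subtype.ext (Nat.dvd_antisymm (hdvd d2 d1 hd2 hd1 h.symm) (hdvd d1 d2 hd1 hd2 h))
    · intro H
      obtain ⟨d, hd, hH⟩ := addSubgroup_eq_zmultiples H
      exact ⟨⟨d, hd⟩, hH.symm⟩
  rw [Nat.card_congr (Equiv.ofBijective _ hbij).symm, Nat.card_eq_finsetCard]
end zmod


section zmod
variable {m : ℕ} [NeZero m]

lemma castHom_eq_zero_iff {d : ℕ} [NeZero d] (hd : d ∣ m) (x : ZMod m) :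
    ZMod.castHom hd (ZMod d) x = 0 ↔ d ∣ x.val := by
  rw [ZMod.castHom_apply, ← ZMod.natCast_val, ZMod.natCast_eq_zero_iff]

omit [NeZero m] in
lemma castHom_natCast {d : ℕ} [NeZero d] (hd : d ∣ m) (k : ℕ) :
    ZMod.castHom hd (ZMod d) ((k : ZMod m)) = (k : ZMod d) := map_natCast _ k

end zmod

section quat

variable {n : ℕ}

lemma inv_a (i : ZMod (2*n)) : (a i : QuaternionGroup n)⁻¹ = a (-i) := rfl

lemma inv_xa (i : ZMod (2*n)) :
    (xa i : QuaternionGroup n)⁻¹ = xa ((n : ZMod (2*n)) + i) := rfl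

/-- The additive subgroup of indices `i` with `a i ∈ K`. -/
def aPart (K : Subgroup (QuaternionGroup n)) : AddSubgroup (ZMod (2*n)) where
  carrier := {i | a i ∈ K}
  zero_mem' := K.one_mem
  add_mem' := fun {x y} hx hy => by
    have h := K.mul_mem hx hy
    rwa [a_mul_a] at h
  neg_mem' := fun {x} hx => by
    have h := K.inv_mem hx
    rwa [inv_a] at h

@[simp] lemma mem_aPart_iff {K : Subgroup (QuaternionGroup n)} {i : ZMod (2*n)} :
    i ∈ aPart K ↔ a i ∈ K := Iff.rfl

/-- Subgroups consisting only of `a`-type elements. -/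
def aSubgroup (H : AddSubgroup (ZMod (2*n))) : Subgroup (QuaternionGroup n) where
  carrier := {x | match x with
    | .a i => i ∈ H
    | .xa _ => False}
  one_mem' := H.zero_mem
  mul_mem' := by
    rintro (i | i) (j | j) hi hj
    · exact H.add_mem hi hj
    · exact hj.elim
    · exact hi.elim
    · exact hi.elim
  inv_mem' := by
    rintro (i | i) hi
    · exact H.neg_mem hi
    · exact hi.elim

@[simp] lemma a_mem_aSubgroup {H : AddSubgroup (ZMod (2*n))} {i : ZMod (2*n)} :
    a i ∈ aSubgroup H ↔ i ∈ H := Iff.rfl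

@[simp] lemma xa_not_mem_aSubgroup {H : AddSubgroup (ZMod (2*n))} {j : ZMod (2*n)} :
    xa j ∈ aSubgroup H ↔ False := Iff.rfl

/-- Subgroups containing `xa`-type elements. -/
def xaSubgroup (d : ℕ) [NeZero d] (hd2 : d ∣ 2*n) (hdn : d ∣ n) (r : ZMod d) :
    Subgroup (QuaternionGroup n) where
  carrier := {x | match x with
    | .a i => ZMod.castHom hd2 (ZMod d) i = 0
    | .xa j => ZMod.castHom hd2 (ZMod d) j = r}
  one_mem' := map_zero _
  mul_mem' := by
    have hn0 : ZMod.castHom hd2 (ZMod d) ((n : ZMod (2*n))) = 0 := by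
      rw [castHom_natCast, ZMod.natCast_eq_zero_iff]
      exact hdn
    rintro (i | i) (j | j) hi hj
    · show ZMod.castHom hd2 (ZMod d) (i + j) = 0
      rw [map_add, hi, hj, add_zero]
    · show ZMod.castHom hd2 (ZMod d) (j - i) = r
      rw [map_sub, hi, hj, sub_zero]
    · show ZMod.castHom hd2 (ZMod d) (i + j) = r
      rw [map_add, hi, hj, add_zero]
    · show ZMod.castHom hd2 (ZMod d) ((n : ZMod (2*n)) + j - i) = 0
      rw [map_sub, map_add, hn0, hi, hj, zero_add, sub_self]
  inv_mem' := by
    have hn0 : ZMod.castHom hd2 (ZMod d) ((n : ZMod (2*n))) = 0 := by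
      rw [castHom_natCast, ZMod.natCast_eq_zero_iff]
      exact hdn
    rintro (i | i) hi
    · show ZMod.castHom hd2 (ZMod d) (-i) = 0
      rw [map_neg, hi, neg_zero]
    · show ZMod.castHom hd2 (ZMod d) ((n : ZMod (2*n)) + i) = r
      rw [map_add, hn0, hi, zero_add]

@[simp] lemma a_mem_xaSubgroup {d : ℕ} [NeZero d] {hd2 : d ∣ 2*n} {hdn : d ∣ n}
    {r : ZMod d} {i : ZMod (2*n)} :
    a i ∈ xaSubgroup d hd2 hdn r ↔ ZMod.castHom hd2 (ZMod d) i = 0 := Iff.rfl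

@[simp] lemma xa_mem_xaSubgroup {d : ℕ} [NeZero d] {hd2 : d ∣ 2*n} {hdn : d ∣ n}
    {r : ZMod d} {j : ZMod (2*n)} :
    xa j ∈ xaSubgroup d hd2 hdn r ↔ ZMod.castHom hd2 (ZMod d) j = r := Iff.rfl

end quat

section count
variable {n : ℕ}

lemma xaSubgroup_dvd (hn : 0 < n) {d1 d2 : ℕ} [NeZero (2*n)]
    (hd1 : d1 ∈ n.divisors) (hd2 : d2 ∈ n.divisors) {r1 : ZMod d1} {r2 : ZMod d2} :
    haveI : NeZero d1 := ⟨(Nat.pos_of_mem_divisors hd1).ne'⟩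
    haveI : NeZero d2 := ⟨(Nat.pos_of_mem_divisors hd2).ne'⟩
    xaSubgroup d1 ((Nat.mem_divisors.mp hd1).1.mul_left 2)
        (Nat.mem_divisors.mp hd1).1 r1
      = xaSubgroup d2 ((Nat.mem_divisors.mp hd2).1.mul_left 2)
        (Nat.mem_divisors.mp hd2).1 r2 → d2 ∣ d1 := by
  haveI : NeZero d1 := ⟨(Nat.pos_of_mem_divisors hd1).ne'⟩
  haveI : NeZero d2 := ⟨(Nat.pos_of_mem_divisors hd2).ne'⟩
  intro hK
  have h1 : a ((d1 : ZMod (2*n))) ∈ xaSubgroup d1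
      ((Nat.mem_divisors.mp hd1).1.mul_left 2) (Nat.mem_divisors.mp hd1).1 r1 := by
    rw [a_mem_xaSubgroup, castHom_natCast, ZMod.natCast_self]
  rw [hK, a_mem_xaSubgroup, castHom_eq_zero_iff, ZMod.val_natCast,
    dvd_mod_iff' ((Nat.mem_divisors.mp hd2).1.mul_left 2)] at h1
  exact h1

lemma card_aType (hn : 0 < n) :
    Nat.card {K : Subgroup (QuaternionGroup n) // ∀ j, xa j ∉ K}
      = (2*n).divisors.card := by
  haveI : NeZero (2*n) := ⟨by omega⟩
  have hbij : Function.Bijective (fun H : AddSubgroup (ZMod (2*n)) =>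
      (⟨aSubgroup H, fun j h => h⟩ :
        {K : Subgroup (QuaternionGroup n) // ∀ j, xa j ∉ K})) := by
    constructor
    · intro H1 H2 h
      have h2 : aSubgroup H1 = aSubgroup H2 := congrArg Subtype.val h
      ext i
      rw [← a_mem_aSubgroup (H := H1), ← a_mem_aSubgroup (H := H2), h2]
    · rintro ⟨K, hK⟩
      refine ⟨aPart K, Subtype.ext ?_⟩
      show aSubgroup (aPart K) = K
      ext x
      rcases x with i | j
      · exact Iff.rfl
      · exact iff_of_false (fun h => h) (hK j)
  rw [Nat.card_congr (Equiv.ofBijective _ hbij).symm, card_addSubgroup_zmod]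

lemma card_xaType (hn : 0 < n) :
    Nat.card {K : Subgroup (QuaternionGroup n) // ∃ j, xa j ∈ K}
      = ∑ d ∈ n.divisors, d := by
  haveI : NeZero (2*n) := ⟨by omega⟩
  haveI hinst : ∀ d : {d : ℕ // d ∈ n.divisors}, NeZero (d : ℕ) :=
    fun d => ⟨(Nat.pos_of_mem_divisors d.2).ne'⟩
  have hbij : Function.Bijective
      (fun x : (Σ d : {d : ℕ // d ∈ n.divisors}, ZMod (d : ℕ)) =>
        (⟨xaSubgroup (x.1 : ℕ) ((Nat.mem_divisors.mp x.1.2).1.mul_left 2)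
            (Nat.mem_divisors.mp x.1.2).1 x.2,
          ⟨((x.2.val : ℕ) : ZMod (2*n)), by
            rw [xa_mem_xaSubgroup, castHom_natCast]
            exact ZMod.natCast_rightInverse x.2⟩⟩ :
          {K : Subgroup (QuaternionGroup n) // ∃ j, xa j ∈ K})) := by
    constructor
    · rintro ⟨⟨d1, hd1⟩, r1⟩ ⟨⟨d2, hd2⟩, r2⟩ h
      haveI : NeZero d1 := ⟨(Nat.pos_of_mem_divisors hd1).ne'⟩
      haveI : NeZero d2 := ⟨(Nat.pos_of_mem_divisors hd2).ne'⟩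
      have hK : xaSubgroup d1 ((Nat.mem_divisors.mp hd1).1.mul_left 2)
            (Nat.mem_divisors.mp hd1).1 r1
          = xaSubgroup d2 ((Nat.mem_divisors.mp hd2).1.mul_left 2)
            (Nat.mem_divisors.mp hd2).1 r2 := congrArg Subtype.val h
      have hd12 : d1 = d2 :=
        Nat.dvd_antisymm (xaSubgroup_dvd hn hd2 hd1 hK.symm) (xaSubgroup_dvd hn hd1 hd2 hK)
      subst hd12
      haveI : NeZero d1 := ⟨(Nat.pos_of_mem_divisors hd1).ne'⟩
      have hr : r1 = r2 := by
        have h1 : xa ((r1.val : ℕ) : ZMod (2*n)) ∈ xaSubgroup d1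
            ((Nat.mem_divisors.mp hd1).1.mul_left 2) (Nat.mem_divisors.mp hd1).1 r1 := by
          rw [xa_mem_xaSubgroup, castHom_natCast]
          exact ZMod.natCast_rightInverse r1
        rw [hK, xa_mem_xaSubgroup, castHom_natCast] at h1
        rw [← h1]
        exact (ZMod.natCast_rightInverse r1).symm
      subst hr
      rfl
    · rintro ⟨K, j₀, hj₀⟩
      have hnH : a ((n : ℕ) : ZMod (2*n)) ∈ K := by
        have h := K.mul_mem hj₀ hj₀
        rw [xa_mul_xa, add_sub_cancel_right] at h
        exact h
      obtain ⟨d, hd, hH⟩ := addSubgroup_eq_zmultiples (aPart K)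
      have hd2 : d ∣ 2*n := (Nat.mem_divisors.mp hd).1
      haveI : NeZero d := ⟨(Nat.pos_of_mem_divisors hd).ne'⟩
      have hmem : ∀ i, a i ∈ K ↔ ZMod.castHom hd2 (ZMod d) i = 0 := by
        intro i
        rw [castHom_eq_zero_iff, ← mem_zmultiples_natCast_iff hd2, ← hH, mem_aPart_iff]
      have hdn : d ∣ n := by
        have h := (hmem _).mp hnH
        rw [castHom_natCast] at h
        exact (ZMod.natCast_eq_zero_iff n d).mp h
      have hdn' : d ∈ n.divisors := Nat.mem_divisors.mpr ⟨hdn, hn.ne'⟩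
      refine ⟨⟨⟨d, hdn'⟩, ZMod.castHom hd2 (ZMod d) j₀⟩, Subtype.ext ?_⟩
      show xaSubgroup d (hdn.mul_left 2) hdn (ZMod.castHom hd2 (ZMod d) j₀) = K
      ext x
      rcases x with i | j
      · rw [a_mem_xaSubgroup, ← hmem i]
      · rw [xa_mem_xaSubgroup]
        constructor
        · intro h
          have h0 : a (j₀ - j) ∈ K := by
            rw [hmem, map_sub, h, sub_self]
          have h1 := K.mul_mem h0 hj₀
          rw [a_mul_xa, sub_sub_cancel] at h1
          exact h1
        · intro h
          have h1 := K.mul_mem hj₀ h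
          rw [xa_mul_xa] at h1
          have h2 := (hmem _).mp h1
          rw [map_sub, map_add, castHom_natCast,
            (ZMod.natCast_eq_zero_iff n d).mpr hdn, zero_add, sub_eq_zero] at h2
          exact h2
  rw [Nat.card_congr (Equiv.ofBijective _ hbij).symm, Nat.card_eq_fintype_card,
    Fintype.card_sigma]
  rw [← Finset.sum_coe_sort n.divisors (fun d => d)]
  exact Finset.sum_congr rfl fun d _ => ZMod.card _

lemma card_subgroup_quat (hn : 0 < n) :
    Nat.card (Subgroup (QuaternionGroup n))
      = (2*n).divisors.card + ∑ d ∈ n.divisors, d := by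
  haveI : NeZero n := ⟨hn.ne'⟩
  classical
  rw [Nat.card_congr (Equiv.sumCompl
    (fun K : Subgroup (QuaternionGroup n) => ∃ j, xa j ∈ K)).symm, Nat.card_sum]
  rw [card_xaType hn]
  rw [Nat.card_congr (Equiv.subtypeEquivRight
    (fun K : Subgroup (QuaternionGroup n) => by push_neg; exact Iff.rfl :
      ∀ K : Subgroup (QuaternionGroup n), (¬∃ j, xa j ∈ K) ↔ ∀ j, xa j ∉ K))]
  rw [card_aType hn, add_comm]

end count


section coprod
variable {G H : Type*} [Group G] [Group H] [Finite G] [Finite H]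

lemma mem_of_mem_coprime (hco : Nat.Coprime (Nat.card G) (Nat.card H))
    {K : Subgroup (G × H)} {g : G} {h : H} (hgh : (g, h) ∈ K) : (g, (1:H)) ∈ K := by
  rcases Nat.lt_or_ge 1 (orderOf g) with h1 | h1
  · have hog : orderOf g ∣ Nat.card G := orderOf_dvd_natCard g
    have co : Nat.Coprime (Nat.card H) (orderOf g) := (hco.symm).coprime_dvd_right hog
    obtain ⟨u, -, hu⟩ := Nat.exists_mul_mod_eq_one_of_coprime co h1
    have hpow : (g, h) ^ (Nat.card H * u) = (g, (1:H)) := by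
      rw [Prod.pow_mk]
      refine Prod.ext ?_ ?_
      · show g ^ (Nat.card H * u) = g
        have h3 : g ^ (Nat.card H * u) = g ^ 1 := by
          rw [pow_eq_pow_iff_modEq]
          show (Nat.card H * u) % orderOf g = 1 % orderOf g
          rw [hu, Nat.mod_eq_of_lt h1]
        rwa [pow_one] at h3
      · show h ^ (Nat.card H * u) = 1
        rw [mul_comm, pow_mul, pow_card_eq_one']
    exact hpow ▸ K.pow_mem hgh _
  · have hg : g = 1 := by
      have h0 : 0 < orderOf g := orderOf_pos g
      exact orderOf_eq_one_iff.mp (by omega)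
    subst hg
    exact K.one_mem

lemma mem_of_mem_coprime' (hco : Nat.Coprime (Nat.card G) (Nat.card H))
    {K : Subgroup (G × H)} {g : G} {h : H} (hgh : (g, h) ∈ K) : ((1:G), h) ∈ K := by
  rcases Nat.lt_or_ge 1 (orderOf h) with h1 | h1
  · have hog : orderOf h ∣ Nat.card H := orderOf_dvd_natCard h
    have co : Nat.Coprime (Nat.card G) (orderOf h) := hco.coprime_dvd_right hog
    obtain ⟨u, -, hu⟩ := Nat.exists_mul_mod_eq_one_of_coprime co h1
    have hpow : (g, h) ^ (Nat.card G * u) = ((1:G), h) := by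
      rw [Prod.pow_mk]
      refine Prod.ext ?_ ?_
      · show g ^ (Nat.card G * u) = 1
        rw [mul_comm, pow_mul, pow_card_eq_one']
      · show h ^ (Nat.card G * u) = h
        have h3 : h ^ (Nat.card G * u) = h ^ 1 := by
          rw [pow_eq_pow_iff_modEq]
          show (Nat.card G * u) % orderOf h = 1 % orderOf h
          rw [hu, Nat.mod_eq_of_lt h1]
        rwa [pow_one] at h3
    exact hpow ▸ K.pow_mem hgh _
  · have hg : h = 1 := by
      have h0 : 0 < orderOf h := orderOf_pos h
      exact orderOf_eq_one_iff.mp (by omega)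
    subst hg
    exact K.one_mem

lemma subgroup_prod_card (hco : Nat.Coprime (Nat.card G) (Nat.card H)) :
    Nat.card (Subgroup (G × H)) = Nat.card (Subgroup G) * Nat.card (Subgroup H) := by
  have hbij : Function.Bijective
      (fun P : Subgroup G × Subgroup H => P.1.prod P.2) := by
    constructor
    · intro P Q hPQ
      have h : P.1.prod P.2 = Q.1.prod Q.2 := hPQ
      have e1 : P.1 = Q.1 := by
        ext g
        constructor
        · intro hg
          have hmem : ((g, (1:H)) : G × H) ∈ Q.1.prod Q.2 := by
            rw [← h]; exact Subgroup.mem_prod.mpr ⟨hg, P.2.one_mem⟩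
          exact (Subgroup.mem_prod.mp hmem).1
        · intro hg
          have hmem : ((g, (1:H)) : G × H) ∈ P.1.prod P.2 := by
            rw [h]; exact Subgroup.mem_prod.mpr ⟨hg, Q.2.one_mem⟩
          exact (Subgroup.mem_prod.mp hmem).1
      have e2 : P.2 = Q.2 := by
        ext x
        constructor
        · intro hx
          have hmem : (((1:G), x) : G × H) ∈ Q.1.prod Q.2 := by
            rw [← h]; exact Subgroup.mem_prod.mpr ⟨P.1.one_mem, hx⟩
          exact (Subgroup.mem_prod.mp hmem).2
        · intro hx
          have hmem : (((1:G), x) : G × H) ∈ P.1.prod P.2 := by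
            rw [h]; exact Subgroup.mem_prod.mpr ⟨Q.1.one_mem, hx⟩
          exact (Subgroup.mem_prod.mp hmem).2
      exact Prod.ext e1 e2
    · intro K
      refine ⟨(K.map (MonoidHom.fst G H), K.map (MonoidHom.snd G H)), ?_⟩
      ext x
      rcases x with ⟨g, h⟩
      rw [Subgroup.mem_prod]
      constructor
      · rintro ⟨hg, hh⟩
        obtain ⟨x, hx, hxg⟩ := hg
        obtain ⟨y, hy, hyh⟩ := hh
        have k1 : ((g, (1:H)) : G × H) ∈ K := by
          have hx2 : (x.1, x.2) ∈ K := hx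
          rw [show x.1 = g from hxg] at hx2
          exact mem_of_mem_coprime hco hx2
        have k2 : (((1:G), h) : G × H) ∈ K := by
          have hy2 : (y.1, y.2) ∈ K := hy
          rw [show y.2 = h from hyh] at hy2
          exact mem_of_mem_coprime' hco hy2
        have hm := K.mul_mem k1 k2
        rwa [Prod.mk_mul_mk, mul_one, one_mul] at hm
      · intro hk
        exact ⟨⟨(g, h), hk, rfl⟩, ⟨(g, h), hk, rfl⟩⟩
  rw [← Nat.card_prod]
  exact (Nat.card_congr (Equiv.ofBijective _ hbij)).symm

end coprod

/-- The total number of subgroups of `T_{4n} × C_p` equals `2·(τ(2n) + σ(n))`,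
for `n ≥ 1` and `p` an odd prime not dividing `n`. -/
theorem num_subgroups_dicyclic_prod_cyclic (n p : ℕ) (hn : 1 ≤ n)
    (hp : p.Prime) (hodd : Odd p) (hpn : ¬ p ∣ n) :
    Nat.card (Subgroup (QuaternionGroup n × Multiplicative (ZMod p))) =
      2 * ((2 * n).divisors.card + ∑ d ∈ n.divisors, d) := by
  haveI : NeZero n := ⟨by omega⟩
  haveI : NeZero p := ⟨hp.pos.ne'⟩
  have hcardQ : Nat.card (QuaternionGroup n) = 4 * n := by
    rw [Nat.card_eq_fintype_card, QuaternionGroup.card]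
  have hcardC : Nat.card (Multiplicative (ZMod p)) = p := by
    rw [Nat.card_congr Multiplicative.toAdd, Nat.card_zmod]
  have hco : Nat.Coprime (Nat.card (QuaternionGroup n))
      (Nat.card (Multiplicative (ZMod p))) := by
    rw [hcardQ, hcardC]
    refine Nat.coprime_comm.mp ((hp.coprime_iff_not_dvd).mpr ?_)
    intro hdvd
    rcases (Nat.Prime.dvd_mul hp).mp hdvd with h4 | hn'
    · have h4' : p ∣ 2 ^ 2 := by norm_num; exact h4
      have h2 : p ∣ 2 := hp.dvd_of_dvd_pow h4'
      have hp2 : p = 2 := (Nat.prime_dvd_prime_iff_eq hp Nat.prime_two).mp h2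
      rw [hp2, Nat.odd_iff] at hodd
      omega
    · exact hpn hn'
  have hCp : Nat.card (Subgroup (Multiplicative (ZMod p))) = 2 := by
    rw [Nat.card_congr AddSubgroup.toSubgroup.toEquiv.symm, card_addSubgroup_zmod,
      Nat.Prime.divisors hp, Finset.card_pair hp.one_lt.ne]
  rw [subgroup_prod_card hco, card_subgroup_quat (by omega : 0 < n), hCp]
  ring
end

section
/- Let n ≥ 1 and let p be an odd prime with p ∤ n. Then the total number of cyclic subgroups of the direct product group T_{4n} × C_p equals 2·(τ(2n) + n). -/
open Subgroup

private lemma aux_isCyclic_zpowers {G : Type*} [Group G] (g : G) :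
    IsCyclic (Subgroup.zpowers g) := by
  constructor
  refine ⟨⟨g, mem_zpowers g⟩, ?_⟩
  rintro ⟨x, k, rfl⟩
  exact ⟨k, by ext; simp⟩

private lemma aux_zpowers_prod {G H : Type*} [Group G] [Group H] {g : G} {h : H}
    (hg : 0 < orderOf g) (hh : 0 < orderOf h)
    (hco : Nat.Coprime (orderOf g) (orderOf h)) :
    Subgroup.zpowers ((g, h) : G × H) = (Subgroup.zpowers g).prod (Subgroup.zpowers h) := by
  apply le_antisymm
  · rw [zpowers_le]
    exact ⟨mem_zpowers g, mem_zpowers h⟩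
  · rintro ⟨x, y⟩ ⟨⟨s, rfl⟩, ⟨t, rfl⟩⟩
    set s' : ℕ := (s % (orderOf g : ℤ)).toNat with hs'
    set t' : ℕ := (t % (orderOf h : ℤ)).toNat with ht'
    have hs0 : (0:ℤ) ≤ s % (orderOf g : ℤ) := Int.emod_nonneg s (by exact_mod_cast hg.ne')
    have ht0 : (0:ℤ) ≤ t % (orderOf h : ℤ) := Int.emod_nonneg t (by exact_mod_cast hh.ne')
    have h1 : g ^ (s' : ℤ) = g ^ s := by
      rw [hs', Int.toNat_of_nonneg hs0, zpow_mod_orderOf]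
    have h2 : h ^ (t' : ℤ) = h ^ t := by
      rw [ht', Int.toNat_of_nonneg ht0, zpow_mod_orderOf]
    obtain ⟨k, hk1, hk2⟩ := Nat.chineseRemainder hco s' t'
    refine ⟨(k : ℤ), ?_⟩
    show ((g, h) : G × H) ^ (k : ℤ) = (g ^ s, h ^ t)
    have hpair : ((g, h) : G × H) ^ (k : ℤ) = (g ^ (k:ℤ), h ^ (k:ℤ)) := rfl
    rw [hpair]
    have e1 : g ^ (k:ℤ) = g ^ s := by
      rw [← h1, zpow_natCast, zpow_natCast]
      exact pow_eq_pow_iff_modEq.mpr hk1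
    have e2 : h ^ (k:ℤ) = h ^ t := by
      rw [← h2, zpow_natCast, zpow_natCast]
      exact pow_eq_pow_iff_modEq.mpr hk2
    rw [e1, e2]


private lemma aux_prod_inj {G H : Type*} [Group G] [Group H]
    {A A' : Subgroup G} {B B' : Subgroup H} (h : A.prod B = A'.prod B') :
    A = A' ∧ B = B' := by
  constructor
  · ext x
    have := SetLike.ext_iff.mp h (x, 1)
    simpa [Subgroup.mem_prod, B.one_mem, B'.one_mem] using this
  · ext y
    have := SetLike.ext_iff.mp h (1, y)
    simpa [Subgroup.mem_prod, A.one_mem, A'.one_mem] using this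

private lemma aux_zpowers_pow_gcd {G : Type*} [Group G] (g : G) (k : ℕ) {m : ℕ}
    (hm : orderOf g = m) :
    Subgroup.zpowers (g ^ k) = Subgroup.zpowers (g ^ Nat.gcd m k) := by
  apply le_antisymm <;> rw [zpowers_le]
  · obtain ⟨c, hc⟩ := Nat.gcd_dvd_right m k
    have hgk : g ^ k = (g ^ Nat.gcd m k) ^ c := by rw [← pow_mul, ← hc]
    exact hgk ▸ Subgroup.pow_mem _ (mem_zpowers _) c
  · refine ⟨Nat.gcdB m k, ?_⟩
    have hgm : g ^ (m : ℤ) = 1 := by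
      rw [zpow_natCast, ← hm, pow_orderOf_eq_one]
    have key : (g ^ k) ^ Nat.gcdB m k
        = g ^ ((m : ℤ) * Nat.gcdA m k + (k : ℤ) * Nat.gcdB m k) := by
      rw [zpow_add, zpow_mul g (m : ℤ), hgm, one_zpow, one_mul, ← zpow_natCast g k, ← zpow_mul]
    show (g ^ k) ^ Nat.gcdB m k = g ^ Nat.gcd m k
    rw [key, ← Nat.gcd_eq_gcd_ab, zpow_natCast]

open Subgroup QuaternionGroup

private def aux_aRange (n : ℕ) : Subgroup (QuaternionGroup n) where
  carrier := Set.range QuaternionGroup.a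
  mul_mem' := by rintro _ _ ⟨i, rfl⟩ ⟨j, rfl⟩; exact ⟨i + j, rfl⟩
  one_mem' := ⟨0, rfl⟩
  inv_mem' := by rintro _ ⟨i, rfl⟩; exact ⟨-i, rfl⟩

private lemma aux_mem_zpowers_a {n : ℕ} {i : ZMod (2*n)} {x : QuaternionGroup n}
    (hx : x ∈ zpowers (QuaternionGroup.a i)) : ∃ j, x = QuaternionGroup.a j := by
  have h : zpowers (QuaternionGroup.a i) ≤ aux_aRange n := zpowers_le.mpr ⟨i, rfl⟩
  obtain ⟨j, hj⟩ := h hx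
  exact ⟨j, hj.symm⟩

private lemma aux_n_add_n (n : ℕ) : ((n : ZMod (2*n)) + (n : ZMod (2*n)) = 0) := by
  rw [← Nat.cast_add, ← two_mul, ZMod.natCast_self]

private lemma aux_xa_cube {n : ℕ} (c : ZMod (2*n)) :
    (QuaternionGroup.xa c) ^ (3:ℕ) = QuaternionGroup.xa (c + (n : ZMod (2*n))) := by
  have h2 : (QuaternionGroup.xa c) ^ (2:ℕ) = QuaternionGroup.a n := QuaternionGroup.xa_sq c
  have h3 : (QuaternionGroup.xa c) ^ (3:ℕ)
      = (QuaternionGroup.xa c) ^ (2:ℕ) * QuaternionGroup.xa c := by rw [← pow_succ]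
  rw [h3, h2, QuaternionGroup.a_mul_xa, sub_eq_add_neg,
    neg_eq_of_add_eq_zero_left (aux_n_add_n n)]

private lemma aux_xa_zpow_three {n : ℕ} (c : ZMod (2*n)) :
    (QuaternionGroup.xa c) ^ (3:ℤ) = QuaternionGroup.xa (c + (n : ZMod (2*n))) := by
  rw [show ((3:ℤ)) = ((3:ℕ):ℤ) by norm_num, zpow_natCast]
  exact aux_xa_cube c

private lemma aux_mem_zpowers_xa {n : ℕ} [NeZero n] (c : ZMod (2*n)) (x : QuaternionGroup n)
    (hx : x ∈ zpowers (QuaternionGroup.xa c)) :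
    x = 1 ∨ x = QuaternionGroup.a n ∨ x = QuaternionGroup.xa c
      ∨ x = QuaternionGroup.xa (c + (n : ZMod (2*n))) := by
  rw [Subgroup.mem_zpowers_iff] at hx
  obtain ⟨k, hk0⟩ := hx
  have h4 : orderOf (QuaternionGroup.xa c) = 4 := QuaternionGroup.orderOf_xa c
  have hk : (QuaternionGroup.xa c) ^ (k % 4) = x := by
    calc (QuaternionGroup.xa c) ^ (k % 4)
        = (QuaternionGroup.xa c) ^ (k % (orderOf (QuaternionGroup.xa c) : ℤ)) := by
          rw [h4]; norm_num
      _ = (QuaternionGroup.xa c) ^ k := zpow_mod_orderOf _ _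
      _ = x := hk0
  have hr0 : (0:ℤ) ≤ k % 4 := Int.emod_nonneg k (by norm_num)
  have hr4 : k % 4 < 4 := Int.emod_lt_of_pos k (by norm_num)
  rw [← hk]
  interval_cases h : (k % 4)
  · left; simp
  · right; right; left; simp
  · right; left
    rw [show ((2:ℤ)) = ((2:ℕ):ℤ) by norm_num, zpow_natCast]
    exact QuaternionGroup.xa_sq c
  · right; right; right
    exact aux_xa_zpow_three c

private lemma aux_zpowers_xa_add_n {n : ℕ} (c : ZMod (2*n)) :
    zpowers (QuaternionGroup.xa (c + (n : ZMod (2*n)))) = zpowers (QuaternionGroup.xa c) := by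
  have key : ∀ d : ZMod (2*n),
      QuaternionGroup.xa (d + (n : ZMod (2*n))) ∈ zpowers (QuaternionGroup.xa d) := by
    intro d
    rw [← aux_xa_zpow_three d]
    exact zpow_mem (mem_zpowers _) 3
  apply le_antisymm <;> rw [zpowers_le]
  · exact key c
  · have := key (c + (n : ZMod (2*n)))
    rwa [add_assoc, aux_n_add_n, add_zero] at this

private lemma aux_orderOf_a_div {n : ℕ} [NeZero n] {d : ℕ} (hd : d ∣ 2*n) (hd0 : 0 < d) :
    orderOf (QuaternionGroup.a ((2*n/d : ℕ) : ZMod (2*n))) = d := by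
  rw [QuaternionGroup.orderOf_a, ZMod.val_natCast]
  have hdvd : 2*n/d ∣ 2*n := Nat.div_dvd_of_dvd hd
  have hg : Nat.gcd (2*n) (2*n/d % (2*n)) = 2*n/d := by
    rw [Nat.gcd_comm, ← Nat.gcd_rec, Nat.gcd_comm]
    exact Nat.gcd_eq_left hdvd
  have h2n : 2*n ≠ 0 := by simpa using (NeZero.ne n)
  rw [hg, Nat.div_div_self hd h2n]

/-- The total number of cyclic subgroups of `T_{4n} × C_p` equals `2·(τ(2n) + n)`,
for `n ≥ 1` and `p` an odd prime not dividing `n`. -/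
theorem num_cyclic_subgroups_dicyclic_prod_cyclic (n p : ℕ) (hn : 1 ≤ n)
    (hp : p.Prime) (hodd : Odd p) (hpn : ¬ p ∣ n) :
    Nat.card {H : Subgroup (QuaternionGroup n × Multiplicative (ZMod p)) // IsCyclic H} =
      2 * ((2 * n).divisors.card + n) := by
  haveI : NeZero n := ⟨by omega⟩
  haveI : Fact p.Prime := ⟨hp⟩
  haveI : NeZero p := ⟨hp.ne_zero⟩
  haveI : Fact (1 < p) := ⟨hp.one_lt⟩
  have h2n0 : (2*n : ℕ) ≠ 0 := by omega
  haveI : NeZero (2*n) := ⟨h2n0⟩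
  have hcardP : Nat.card (Multiplicative (ZMod p)) = p := by
    rw [Nat.card_eq_fintype_card]
    simp [ZMod.card]
  haveI : Fact (Nat.card (Multiplicative (ZMod p))).Prime := ⟨by rwa [hcardP]⟩
  have hGcard : Nat.card (QuaternionGroup n) = 4*n := by
    rw [Nat.card_eq_fintype_card, QuaternionGroup.card]
  -- coprimality
  have hco4n : Nat.Coprime (4*n) p := by
    have hc2 : Nat.Coprime 2 p := Nat.coprime_two_left.mpr hodd
    have hcn : Nat.Coprime n p := ((Nat.Prime.coprime_iff_not_dvd hp).mpr hpn).symm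
    have : (4*n : ℕ) = 2*(2*n) := by ring
    rw [this]
    exact hc2.mul ((hc2.mul hcn))
  have hco : ∀ (w : QuaternionGroup n) (u : Multiplicative (ZMod p)),
      Nat.Coprime (orderOf w) (orderOf u) := by
    intro w u
    have h1 : orderOf w ∣ 4*n := by
      have := orderOf_dvd_card (x := w)
      rwa [← Nat.card_eq_fintype_card, hGcard] at this
    have h2 : orderOf u ∣ p := by
      have := orderOf_dvd_card (x := u)
      rwa [← Nat.card_eq_fintype_card, hcardP] at this
    exact Nat.Coprime.coprime_dvd_right h2 (Nat.Coprime.coprime_dvd_left h1 hco4n)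
  have hzp : ∀ (w : QuaternionGroup n) (u : Multiplicative (ZMod p)),
      Subgroup.zpowers ((w, u) : QuaternionGroup n × Multiplicative (ZMod p))
      = (Subgroup.zpowers w).prod (Subgroup.zpowers u) := fun w u =>
    aux_zpowers_prod (orderOf_pos w) (orderOf_pos u) (hco w u)
  -- generators
  set u1 : Multiplicative (ZMod p) := Multiplicative.ofAdd 1 with hu1def
  have hu1 : Subgroup.zpowers u1 = ⊤ := by
    apply zpowers_eq_top_of_prime_card hcardP
    simp [hu1def]
  set genP : Bool → Multiplicative (ZMod p) := fun b => if b then u1 else 1 with hgenP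
  set gen : (↥(2*n).divisors ⊕ ZMod n) → QuaternionGroup n := fun c => match c with
    | .inl d => QuaternionGroup.a (((2*n/(d:ℕ) : ℕ)) : ZMod (2*n))
    | .inr i => QuaternionGroup.xa ((i.val : ℕ) : ZMod (2*n)) with hgen
  have hzb : ∀ b : Bool, Subgroup.zpowers (genP b) = if b then ⊤ else ⊥ := by
    intro b; cases b
    · simp [hgenP]
    · simpa [hgenP] using hu1
  set F : (↥(2*n).divisors ⊕ ZMod n) × Bool
      → {H : Subgroup (QuaternionGroup n × Multiplicative (ZMod p)) // IsCyclic H} :=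
    fun x => ⟨Subgroup.zpowers (gen x.1, genP x.2), aux_isCyclic_zpowers _⟩ with hF
  have horder_gen_inl : ∀ d : ↥(2*n).divisors, orderOf (gen (.inl d)) = (d : ℕ) := by
    rintro ⟨d, hd⟩
    rw [Nat.mem_divisors] at hd
    exact aux_orderOf_a_div hd.1 (Nat.pos_of_dvd_of_pos hd.1 (by omega))
  have hvlt : ∀ i : ZMod n, (i.val : ℕ) < n := fun i => ZMod.val_lt i
  -- injectivity
  have hinj : Function.Injective F := by
    rintro ⟨c, b⟩ ⟨c', b'⟩ hFeq
    have heq : Subgroup.zpowers ((gen c, genP b) : QuaternionGroup n × Multiplicative (ZMod p))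
        = Subgroup.zpowers ((gen c', genP b') : QuaternionGroup n × Multiplicative (ZMod p)) :=
      congrArg Subtype.val hFeq
    rw [hzp, hzp] at heq
    obtain ⟨h1, h2⟩ := aux_prod_inj heq
    have hb : b = b' := by
      by_contra hbb
      rw [hzb, hzb] at h2
      cases b <;> cases b' <;> simp_all
    have hc : c = c' := by
      match c, c' with
      | .inl d, .inl d' =>
          have : (d : ℕ) = (d' : ℕ) := by
            rw [← horder_gen_inl d, ← horder_gen_inl d', ← Nat.card_zpowers, ← Nat.card_zpowers, h1]
          exact congrArg Sum.inl (Subtype.ext this)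
      | .inl d, .inr i =>
          exfalso
          have hmem : gen (.inr i) ∈ Subgroup.zpowers (gen (.inl d)) := by
            rw [h1]; exact mem_zpowers _
          obtain ⟨j, hj⟩ := aux_mem_zpowers_a hmem
          simp [hgen] at hj
      | .inr i, .inl d =>
          exfalso
          have hmem : gen (.inr i) ∈ Subgroup.zpowers (gen (.inl d)) := by
            rw [← h1]; exact mem_zpowers _
          obtain ⟨j, hj⟩ := aux_mem_zpowers_a hmem
          simp [hgen] at hj
      | .inr i, .inr j =>
          have hmem : QuaternionGroup.xa ((j.val : ℕ) : ZMod (2*n))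
              ∈ Subgroup.zpowers (QuaternionGroup.xa ((i.val : ℕ) : ZMod (2*n))) := by
            rw [show Subgroup.zpowers (QuaternionGroup.xa ((i.val : ℕ) : ZMod (2*n)))
              = Subgroup.zpowers (QuaternionGroup.xa ((j.val : ℕ) : ZMod (2*n))) from h1]
            exact mem_zpowers _
          rcases aux_mem_zpowers_xa _ _ hmem with h | h | h | h
          · exact absurd h (by simp [QuaternionGroup.one_def, -QuaternionGroup.a_zero])
          · exact absurd h (by simp)
          · have h3 := congrArg ZMod.val (QuaternionGroup.xa.inj h)
            have hjlt : j.val < 2*n := lt_of_lt_of_le (hvlt j) (by omega)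
            have hilt : i.val < 2*n := lt_of_lt_of_le (hvlt i) (by omega)
            rw [ZMod.val_natCast_of_lt hjlt, ZMod.val_natCast_of_lt hilt] at h3
            exact congrArg Sum.inr (ZMod.val_injective _ h3.symm)
          · exfalso
            have hcast : ((i.val : ℕ) : ZMod (2*n)) + (n : ZMod (2*n))
                = (((i.val + n : ℕ)) : ZMod (2*n)) := by push_cast; ring
            rw [hcast] at h
            have h3 := congrArg ZMod.val (QuaternionGroup.xa.inj h)
            have hjlt : j.val < 2*n := lt_of_lt_of_le (hvlt j) (by omega)
            have hilt : i.val + n < 2*n := by have := hvlt i; omega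
            rw [ZMod.val_natCast_of_lt hjlt, ZMod.val_natCast_of_lt hilt] at h3
            have := hvlt j
            omega
    rw [hb, hc]
  -- surjectivity
  have hsurj : Function.Surjective F := by
    rintro ⟨H, hH⟩
    obtain ⟨⟨g, hgH⟩, hgen'⟩ := hH.exists_generator
    have hHz : H = Subgroup.zpowers g := by
      apply le_antisymm
      · intro x hx
        obtain ⟨k, hk⟩ := Subgroup.mem_zpowers_iff.mp (hgen' ⟨x, hx⟩)
        refine ⟨k, ?_⟩
        show g ^ k = x
        simpa using congrArg Subtype.val hk
      · exact zpowers_le.mpr hgH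
    obtain ⟨w, u⟩ := g
    have hu : Subgroup.zpowers u = ⊥ ∨ Subgroup.zpowers u = ⊤ :=
      Subgroup.eq_bot_or_eq_top_of_prime_card (Subgroup.zpowers u)
    have hbex : ∃ b, Subgroup.zpowers u = Subgroup.zpowers (genP b) := by
      rcases hu with h | h
      · exact ⟨false, by rw [h, hzb false]; simp⟩
      · exact ⟨true, by rw [h, hzb true]; simp⟩
    have hwex : ∃ c, Subgroup.zpowers w = Subgroup.zpowers (gen c) := by
      match w with
      | QuaternionGroup.a i =>
          have hdd : orderOf (QuaternionGroup.a i) ∈ (2*n).divisors := by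
            rw [Nat.mem_divisors, QuaternionGroup.orderOf_a]
            exact ⟨Nat.div_dvd_of_dvd (Nat.gcd_dvd_left _ _), h2n0⟩
          refine ⟨Sum.inl ⟨orderOf (QuaternionGroup.a i), hdd⟩, ?_⟩
          have hkey : 2*n / orderOf (QuaternionGroup.a i) = Nat.gcd (2*n) i.val := by
            rw [QuaternionGroup.orderOf_a]
            exact Nat.div_div_self (Nat.gcd_dvd_left _ _) h2n0
          show Subgroup.zpowers (QuaternionGroup.a i)
            = Subgroup.zpowers (QuaternionGroup.a (((2*n / orderOf (QuaternionGroup.a i) : ℕ)) : ZMod (2*n)))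
          rw [hkey]
          have e1 : QuaternionGroup.a i = (QuaternionGroup.a 1 : QuaternionGroup n) ^ (i.val) := by
            rw [QuaternionGroup.a_one_pow, ZMod.natCast_zmod_val]
          have e2 : QuaternionGroup.a ((Nat.gcd (2*n) i.val : ℕ) : ZMod (2*n))
              = (QuaternionGroup.a 1 : QuaternionGroup n) ^ (Nat.gcd (2*n) i.val) := by
            rw [QuaternionGroup.a_one_pow]
          rw [e1, e2]
          exact aux_zpowers_pow_gcd _ _ QuaternionGroup.orderOf_a_one
      | QuaternionGroup.xa i =>
          refine ⟨Sum.inr ((i.val : ZMod n)), ?_⟩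
          show Subgroup.zpowers (QuaternionGroup.xa i)
            = Subgroup.zpowers (QuaternionGroup.xa ((((i.val : ZMod n)).val : ℕ) : ZMod (2*n)))
          have hvv : ((i.val : ZMod n)).val = i.val % n := ZMod.val_natCast n _
          have hilt : i.val < 2*n := ZMod.val_lt i
          rcases Nat.lt_or_ge i.val n with hlt | hge
          · rw [hvv, Nat.mod_eq_of_lt hlt, ZMod.natCast_zmod_val]
          · have hmod : i.val % n = i.val - n := by
              rw [Nat.mod_eq_sub_mod hge, Nat.mod_eq_of_lt (by omega)]
            rw [hvv, hmod]
            have hsum : (((i.val - n : ℕ)) : ZMod (2*n)) + (n : ZMod (2*n)) = i := by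
              rw [← Nat.cast_add, Nat.sub_add_cancel hge, ZMod.natCast_zmod_val]
            have hxa : QuaternionGroup.xa i
                = QuaternionGroup.xa ((((i.val - n : ℕ)) : ZMod (2*n)) + (n : ZMod (2*n))) := by
              rw [hsum]
            rw [hxa, aux_zpowers_xa_add_n]
    obtain ⟨c, hcc⟩ := hwex
    obtain ⟨b, hbb⟩ := hbex
    refine ⟨(c, b), ?_⟩
    apply Subtype.ext
    show Subgroup.zpowers ((gen c, genP b) : QuaternionGroup n × Multiplicative (ZMod p)) = H
    rw [hHz, hzp, hzp, ← hcc, ← hbb]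
  rw [← Nat.card_eq_of_bijective F ⟨hinj, hsurj⟩]
  rw [Nat.card_eq_fintype_card]
  simp [Fintype.card_sum, ZMod.card, Fintype.card_coe]
  ring
end

section
/- Let n ≥ 1. Then the total number of subgroups of the dicyclic group T_{4n} equals τ(2n) + σ(n). -/
namespace QuatCount
open QuaternionGroup

variable {n : ℕ}

/-- membership predicate for "A-type" subgroups -/
def amem (d : ℕ) (hd : d ∣ 2 * n) : QuaternionGroup n → Prop
  | .a j => ZMod.castHom hd (ZMod d) j = 0
  | .xa _ => False

/-- membership predicate for "B-type" (dicyclic) subgroups -/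
def bmem (d : ℕ) (hd : d ∣ n) (i : ZMod d) : QuaternionGroup n → Prop
  | .a j => ZMod.castHom (hd.mul_left 2) (ZMod d) j = 0
  | .xa j => ZMod.castHom (hd.mul_left 2) (ZMod d) j = i

lemma cast_n_eq_zero {d : ℕ} (hd : d ∣ n) : ((n : ℕ) : ZMod d) = 0 := by
  obtain ⟨k, rfl⟩ := hd
  push_cast
  simp [ZMod.natCast_self]

def asub (d : ℕ) (hd : d ∣ 2 * n) : Subgroup (QuaternionGroup n) where
  carrier := {x | amem d hd x}
  one_mem' := by
    show ZMod.castHom hd (ZMod d) 0 = 0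
    exact map_zero _
  mul_mem' := by
    rintro (j | j) (k | k) hj hk
    · show ZMod.castHom hd (ZMod d) (j + k) = 0
      rw [map_add, hj, hk, add_zero]
    · exact hk.elim
    · exact hj.elim
    · exact hj.elim
  inv_mem' := by
    rintro (j | j) hj
    · show ZMod.castHom hd (ZMod d) (-j) = 0
      rw [map_neg, hj, neg_zero]
    · exact hj.elim

def bsub (d : ℕ) (hd : d ∣ n) (i : ZMod d) : Subgroup (QuaternionGroup n) where
  carrier := {x | bmem d hd i x}
  one_mem' := by
    show ZMod.castHom (hd.mul_left 2) (ZMod d) 0 = 0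
    exact map_zero _
  mul_mem' := by
    have hn0 : ZMod.castHom (hd.mul_left 2) (ZMod d) ((n : ℕ) : ZMod (2 * n)) = 0 := by
      rw [map_natCast, cast_n_eq_zero hd]
    rintro (j | j) (k | k) hj hk
    · show ZMod.castHom (hd.mul_left 2) (ZMod d) (j + k) = 0
      rw [map_add, hj, hk, add_zero]
    · show ZMod.castHom (hd.mul_left 2) (ZMod d) (k - j) = i
      rw [map_sub, hj, hk, sub_zero]
    · show ZMod.castHom (hd.mul_left 2) (ZMod d) (j + k) = i
      rw [map_add, hj, hk, add_zero]
    · show ZMod.castHom (hd.mul_left 2) (ZMod d) ((n : ZMod (2 * n)) + k - j) = 0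
      rw [map_sub, map_add, hj, hk, hn0, zero_add, sub_self]
  inv_mem' := by
    rintro (j | j) hj
    · show ZMod.castHom (hd.mul_left 2) (ZMod d) (-j) = 0
      rw [map_neg, hj, neg_zero]
    · show ZMod.castHom (hd.mul_left 2) (ZMod d) ((n : ZMod (2 * n)) + j) = i
      rw [map_add, hj, map_natCast, cast_n_eq_zero hd, zero_add]

variable [NeZero n]

instance : NeZero (2 * n) := ⟨by have := NeZero.ne n; omega⟩

lemma dvd_ne_zero {d : ℕ} (hd : d ∣ 2 * n) : d ≠ 0 := by
  rintro rfl
  exact NeZero.ne (2 * n) (Nat.eq_zero_of_zero_dvd hd)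

lemma cast_eq_zero_iff {d : ℕ} (hd : d ∣ 2 * n) (j : ZMod (2 * n)) :
    ZMod.castHom hd (ZMod d) j = 0 ↔ d ∣ j.val := by
  haveI : NeZero d := ⟨dvd_ne_zero hd⟩
  rw [ZMod.castHom_apply, ← ZMod.natCast_val, ZMod.natCast_eq_zero_iff]

/-- Every subgroup has an associated divisor `d` of `2n` describing its "rotation part". -/
lemma exists_d (H : Subgroup (QuaternionGroup n)) :
    ∃ d : ℕ, 0 < d ∧ d ∣ 2 * n ∧ ∀ j : ZMod (2 * n), (a j ∈ H ↔ d ∣ j.val) := by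
  have h2n : 0 < 2 * n ∧ (a ((2 * n : ℕ) : ZMod (2 * n)) : QuaternionGroup n) ∈ H := by
    constructor
    · have := NeZero.ne n; omega
    · have h0 : ((2 * n : ℕ) : ZMod (2 * n)) = 0 := ZMod.natCast_self _
      rw [h0, ← one_def]
      exact H.one_mem
  let P : ℕ → Prop := fun k => 0 < k ∧ (a (k : ZMod (2 * n)) : QuaternionGroup n) ∈ H
  have hex : ∃ k, P k := ⟨2 * n, h2n⟩
  classical
  let d := Nat.find hex
  obtain ⟨hdpos, hdmem⟩ : P d := Nat.find_spec hex
  -- closure of the set of natural exponents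
  have hmemN : ∀ k : ℕ, (a (k : ZMod (2 * n)) : QuaternionGroup n) ∈ H → d ∣ k := by
    intro k
    induction k using Nat.strong_induction_on with
    | _ k ih =>
      intro hk
      rcases Nat.eq_zero_or_pos k with rfl | hkpos
      · exact dvd_zero d
      · have hdk : d ≤ k := Nat.find_min' hex ⟨hkpos, hk⟩
        have hsub : (a (((k - d : ℕ) : ℕ) : ZMod (2 * n)) : QuaternionGroup n) ∈ H := by
          have : (((k - d : ℕ) : ℕ) : ZMod (2 * n)) = (k : ZMod (2 * n)) - d := by
            push_cast [Nat.cast_sub hdk]; ring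
          rw [this]
          have := H.mul_mem hk (H.inv_mem hdmem)
          simpa [sub_eq_add_neg,
            show ((a (d : ZMod (2 * n)) : QuaternionGroup n))⁻¹ = a (-(d : ZMod (2 * n))) from rfl]
            using this
        rcases Nat.eq_zero_or_pos (k - d) with hkd | hkd
        · have : k = d := by omega
          exact this ▸ dvd_refl d
        · have h2 := ih (k - d) (by omega) hsub
          have hk2 : k = (k - d) + d := by omega
          rw [hk2]
          exact Nat.dvd_add h2 dvd_rfl
  refine ⟨d, hdpos, hmemN _ h2n.2, fun j => ?_⟩
  constructor
  · intro hj
    apply hmemN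
    rwa [ZMod.natCast_val, ZMod.cast_id]
  · rintro ⟨t, ht⟩
    have : a j = ((a ((d : ℕ) : ZMod (2 * n)) : QuaternionGroup n)) ^ t := by
      rw [← a_one_pow, ← pow_mul, a_one_pow, ← ht, ZMod.natCast_val, ZMod.cast_id]
    rw [this]
    exact H.pow_mem hdmem t

lemma classify (H : Subgroup (QuaternionGroup n)) :
    (∃ d, ∃ hd : d ∣ 2 * n, H = asub d hd) ∨
    (∃ d, ∃ hd : d ∣ n, ∃ i : ZMod d, H = bsub d hd i) := by
  obtain ⟨d, hdpos, hdvd, hiff⟩ := exists_d H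
  by_cases hxa : ∃ j, xa j ∈ H
  · right
    obtain ⟨j₀, hj₀⟩ := hxa
    have hdn : d ∣ n := by
      have han : (a ((n : ℕ) : ZMod (2 * n)) : QuaternionGroup n) ∈ H := by
        have := H.mul_mem hj₀ hj₀
        simpa using this
      have := (hiff _).mp han
      rwa [ZMod.val_natCast, Nat.mod_eq_of_lt (by have := NeZero.ne n; omega)] at this
    refine ⟨d, hdn, ZMod.castHom (hdn.mul_left 2) (ZMod d) j₀, ?_⟩
    ext x
    have key : ∀ j : ZMod (2 * n), (a j ∈ H ↔ ZMod.castHom (hdn.mul_left 2) (ZMod d) j = 0) :=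
      fun j => (hiff j).trans (cast_eq_zero_iff _ j).symm
    cases x with
    | a j => exact (key j).trans Iff.rfl
    | xa j =>
      show xa j ∈ H ↔ bmem d hdn _ (xa j)
      constructor
      · intro hj
        have : (a (j - j₀) : QuaternionGroup n) ∈ H := by
          have := H.mul_mem (H.inv_mem hj₀) hj
          have heq : (xa j₀ : QuaternionGroup n)⁻¹ * xa j = a (j - j₀) := by
            show xa ((n : ZMod (2*n)) + j₀) * xa j = _
            rw [xa_mul_xa]
            congr 1
            ring
          rwa [heq] at this
        have h0 := (key _).mp this
        show ZMod.castHom _ (ZMod d) j = _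
        rw [map_sub, sub_eq_zero] at h0
        exact h0
      · intro hj
        have h0 : ZMod.castHom (hdn.mul_left 2) (ZMod d) (j - j₀) = 0 := by
          rw [map_sub, hj, sub_self]
        have := H.mul_mem hj₀ ((key _).mpr h0)
        rwa [xa_mul_a, add_sub_cancel] at this
  · left
    refine ⟨d, hdvd, ?_⟩
    ext x
    cases x with
    | a j =>
      show a j ∈ H ↔ amem d hdvd (a j)
      exact (hiff j).trans (cast_eq_zero_iff _ j).symm
    | xa j =>
      show xa j ∈ H ↔ False
      simp only [iff_false]
      exact fun h => hxa ⟨j, h⟩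

lemma a_cast_mem_asub {d : ℕ} (hd : d ∣ 2 * n) :
    (a ((d : ℕ) : ZMod (2 * n)) : QuaternionGroup n) ∈ asub d hd := by
  show ZMod.castHom hd (ZMod d) ((d : ℕ) : ZMod (2 * n)) = 0
  rw [map_natCast, ZMod.natCast_self]

lemma asub_dvd {d e : ℕ} (hd : d ∣ 2 * n) (he : e ∣ 2 * n)
    (h : (a ((d : ℕ) : ZMod (2 * n)) : QuaternionGroup n) ∈ asub e he) : e ∣ d := by
  have := (cast_eq_zero_iff he _).mp h
  rw [ZMod.val_natCast] at this
  exact (Nat.dvd_mod_iff he).mp this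

lemma xa_not_mem_asub {d : ℕ} (hd : d ∣ 2 * n) (j : ZMod (2 * n)) :
    (xa j : QuaternionGroup n) ∉ asub d hd := fun h => h

lemma xa_cast_mem_bsub {d : ℕ} (hd : d ∣ n) (i : ZMod d) :
    (xa ((i.val : ℕ) : ZMod (2 * n)) : QuaternionGroup n) ∈ bsub d hd i := by
  haveI : NeZero d := ⟨dvd_ne_zero (hd.mul_left 2)⟩
  show ZMod.castHom (hd.mul_left 2) (ZMod d) ((i.val : ℕ) : ZMod (2 * n)) = i
  rw [map_natCast, ZMod.natCast_val, ZMod.cast_id]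

lemma a_cast_mem_bsub {d : ℕ} (hd : d ∣ n) (i : ZMod d) :
    (a ((d : ℕ) : ZMod (2 * n)) : QuaternionGroup n) ∈ bsub d hd i := by
  show ZMod.castHom (hd.mul_left 2) (ZMod d) ((d : ℕ) : ZMod (2 * n)) = 0
  rw [map_natCast, ZMod.natCast_self]

lemma bsub_dvd {d e : ℕ} (hd : d ∣ 2 * n) (he : e ∣ n) {i : ZMod e}
    (h : (a ((d : ℕ) : ZMod (2 * n)) : QuaternionGroup n) ∈ bsub e he i) : e ∣ d := by
  have h' : ZMod.castHom (he.mul_left 2) (ZMod e) ((d : ℕ) : ZMod (2 * n)) = 0 := h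
  have := (cast_eq_zero_iff (he.mul_left 2) _).mp h'
  rw [ZMod.val_natCast] at this
  exact (Nat.dvd_mod_iff (he.mul_left 2)).mp this

lemma bsub_i_eq {d : ℕ} (hd : d ∣ n) {i i' : ZMod d}
    (h : (xa ((i.val : ℕ) : ZMod (2 * n)) : QuaternionGroup n) ∈ bsub d hd i') : i = i' := by
  haveI : NeZero d := ⟨dvd_ne_zero (hd.mul_left 2)⟩
  have h' : ZMod.castHom (hd.mul_left 2) (ZMod d) ((i.val : ℕ) : ZMod (2 * n)) = i' := h
  rwa [map_natCast, ZMod.natCast_val, ZMod.cast_id] at h'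

/-- The index type for subgroups of `QuaternionGroup n`. -/
def Idx (n : ℕ) : Type :=
  {d : ℕ // d ∈ (2 * n).divisors} ⊕ (Σ d : {d : ℕ // d ∈ n.divisors}, ZMod d.1)

/-- The classification map. -/
def f : Idx n → Subgroup (QuaternionGroup n)
  | .inl ⟨d, hd⟩ => asub d (Nat.mem_divisors.mp hd).1
  | .inr ⟨⟨d, hd⟩, i⟩ => bsub d (Nat.mem_divisors.mp hd).1 i

lemma f_bijective : Function.Bijective (f (n := n)) := by
  constructor
  · rintro (⟨d, hd⟩ | ⟨⟨d, hd⟩, i⟩) (⟨e, he⟩ | ⟨⟨e, he⟩, i'⟩) h <;> simp only [f] at h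
    · have h1 : e ∣ d := asub_dvd (Nat.mem_divisors.mp hd).1 (Nat.mem_divisors.mp he).1
        (h ▸ a_cast_mem_asub (Nat.mem_divisors.mp hd).1)
      have h2 : d ∣ e := asub_dvd (Nat.mem_divisors.mp he).1 (Nat.mem_divisors.mp hd).1
        (h.symm ▸ a_cast_mem_asub (Nat.mem_divisors.mp he).1)
      obtain rfl := Nat.dvd_antisymm h2 h1
      rfl
    · exact absurd (h.symm ▸ xa_cast_mem_bsub (Nat.mem_divisors.mp he).1 i')
        (xa_not_mem_asub _ _)
    · exact absurd (h ▸ xa_cast_mem_bsub (Nat.mem_divisors.mp hd).1 i)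
        (xa_not_mem_asub _ _)
    · have h1 : e ∣ d := bsub_dvd ((Nat.mem_divisors.mp hd).1.mul_left 2) _
        (h ▸ a_cast_mem_bsub (Nat.mem_divisors.mp hd).1 i)
      have h2 : d ∣ e := bsub_dvd ((Nat.mem_divisors.mp he).1.mul_left 2) _
        (h.symm ▸ a_cast_mem_bsub (Nat.mem_divisors.mp he).1 i')
      have hde : d = e := Nat.dvd_antisymm h2 h1
      subst hde
      have hi : i = i' := bsub_i_eq _ (h ▸ xa_cast_mem_bsub (Nat.mem_divisors.mp hd).1 i)
      subst hi
      rfl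
  · intro H
    rcases classify H with ⟨d, hd, rfl⟩ | ⟨d, hd, i, rfl⟩
    · exact ⟨.inl ⟨d, Nat.mem_divisors.mpr ⟨hd, NeZero.ne _⟩⟩, rfl⟩
    · exact ⟨.inr ⟨⟨d, Nat.mem_divisors.mpr ⟨hd, NeZero.ne _⟩⟩, i⟩, rfl⟩

end QuatCount

/-- The total number of subgroups of the dicyclic group `T_{4n}` equals `τ(2n) + σ(n)`. -/
theorem num_subgroups_dicyclic (n : ℕ) (hn : 1 ≤ n) :
    Nat.card (Subgroup (QuaternionGroup n)) =
      (2 * n).divisors.card + ∑ d ∈ n.divisors, d := by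
  haveI : NeZero n := ⟨by omega⟩
  haveI inst1 : ∀ d : {d : ℕ // d ∈ n.divisors}, NeZero (d.1) :=
    fun d => ⟨(Nat.pos_of_mem_divisors d.2).ne'⟩
  haveI inst2 : ∀ d : {d : ℕ // d ∈ n.divisors}, Fintype (ZMod d.1) :=
    fun d => ZMod.fintype _
  rw [← Nat.card_congr (Equiv.ofBijective _ (QuatCount.f_bijective (n := n)))]
  unfold QuatCount.Idx
  rw [Nat.card_sum, Nat.card_eq_fintype_card, Nat.card_eq_fintype_card,
    Fintype.card_coe, Fintype.card_sigma]
  congr 1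
  calc (∑ d : {d : ℕ // d ∈ n.divisors}, Fintype.card (ZMod d.1))
      = ∑ d : {d : ℕ // d ∈ n.divisors}, d.1 := by
        refine Finset.sum_congr rfl fun d _ => ?_
        exact ZMod.card d.1
    _ = ∑ d ∈ n.divisors, d := Finset.sum_coe_sort n.divisors (fun d => d)
end

section
/- Let n ≥ 1. Then the total number of cyclic subgroups of the dicyclic group T_{4n} equals τ(2n) + n. -/
open Subgroup QuaternionGroup

private lemma isCyclic_zpowers' {G : Type*} [Group G] (g : G) : IsCyclic (zpowers g) := by
  constructor
  refine ⟨⟨g, mem_zpowers g⟩, ?_⟩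
  rintro ⟨x, hx⟩
  obtain ⟨k, hk⟩ := mem_zpowers_iff.mp hx
  exact mem_zpowers_iff.mpr ⟨k, Subtype.ext (by simpa using hk)⟩

private lemma subgroup_eq_of_card_eq' {α : Type*} [Group α] [Fintype α] [IsCyclic α]
    {H K : Subgroup α} (h : Nat.card H = Nat.card K) : H = K := by
  classical
  have key : ∀ L : Subgroup α, (L : Set α).toFinset =
      Finset.univ.filter (fun x => x ^ (Nat.card L) = 1) := by
    intro L
    have hpos : 0 < Nat.card L := Nat.card_pos
    apply Finset.eq_of_subset_of_card_le
    · intro x hx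
      simp only [Set.mem_toFinset, SetLike.mem_coe] at hx
      simp only [Finset.mem_filter, Finset.mem_univ, true_and]
      have h1 : (⟨x, hx⟩ : L) ^ (Nat.card L) = 1 := pow_card_eq_one'
      have h2 : ((⟨x, hx⟩ : L) : α) ^ Nat.card L = 1 := by
        rw [← SubgroupClass.coe_pow, h1, OneMemClass.coe_one]
      exact h2
    · calc (Finset.univ.filter fun x => x ^ (Nat.card L) = 1).card ≤ Nat.card L :=
            IsCyclic.card_pow_eq_one_le hpos
        _ = (L : Set α).toFinset.card := by
            simp [Set.toFinset_card, Nat.card_eq_fintype_card, SetLike.coe_sort_coe]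
  have h2 : (H : Set α).toFinset = (K : Set α).toFinset := by
    rw [key H, key K, h]
  exact SetLike.ext' (by simpa [Set.toFinset_inj] using h2)

private lemma xa_pow_three' {n : ℕ} (j : ZMod (2*n)) :
    (xa j : QuaternionGroup n) ^ 3 = xa (j - (n : ZMod (2*n))) := by
  rw [show (3:ℕ) = 2 + 1 from rfl, pow_add, xa_sq, pow_one, a_mul_xa]

private lemma xa_mem_zpowers_xa' {n : ℕ} [NeZero n] {i j : ZMod (2*n)}
    (h : (xa i : QuaternionGroup n) ∈ zpowers (xa j)) :
    i = j ∨ i = j - (n : ZMod (2*n)) := by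
  rw [← mem_powers_iff_mem_zpowers] at h
  obtain ⟨k, hk⟩ := h
  change (xa j : QuaternionGroup n) ^ k = xa i at hk
  have hmod : (xa j : QuaternionGroup n) ^ (k % 4) = xa i := by
    rw [← Nat.div_add_mod k 4] at hk
    rw [← hk, pow_add, pow_mul, xa_pow_four, one_pow, one_mul]
  have hlt : k % 4 < 4 := Nat.mod_lt _ (by norm_num)
  set r := k % 4 with hr
  clear_value r
  interval_cases r
  · rw [pow_zero, one_def] at hmod
    exact (nomatch hmod)
  · rw [pow_one] at hmod
    injection hmod with h'
    exact Or.inl h'.symm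
  · rw [xa_sq] at hmod
    exact (nomatch hmod)
  · rw [xa_pow_three'] at hmod
    injection hmod with h'
    exact Or.inr h'.symm

private lemma zpowers_xa_sub_n {n : ℕ} (j : ZMod (2*n)) :
    zpowers (xa (j - (n : ZMod (2*n))) : QuaternionGroup n) = zpowers (xa j) := by
  have h2n : ((2 * n : ℕ) : ZMod (2*n)) = 0 := ZMod.natCast_self _
  apply le_antisymm <;> rw [zpowers_le]
  · exact xa_pow_three' j ▸ pow_mem (mem_zpowers _) 3
  · have h3 : (xa (j - (n : ZMod (2*n))) : QuaternionGroup n) ^ 3 = xa j := by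
      rw [xa_pow_three']
      congr 1
      have hnn : (n : ZMod (2*n)) + n = 0 := by
        rw [← Nat.cast_add, ← two_mul, h2n]
      rw [sub_sub, hnn, sub_zero]
    exact h3 ▸ pow_mem (mem_zpowers _) 3

/-- The total number of cyclic subgroups of the dicyclic group `T_{4n}` equals `τ(2n) + n`. -/
theorem num_cyclic_subgroups_dicyclic (n : ℕ) (hn : 1 ≤ n) :
    Nat.card {H : Subgroup (QuaternionGroup n) // IsCyclic H} =
      (2 * n).divisors.card + n := by
  classical
  haveI : NeZero n := ⟨by omega⟩
  have h2n0 : 2 * n ≠ 0 := by omega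
  haveI : NeZero (2 * n) := ⟨h2n0⟩
  set A : Subgroup (QuaternionGroup n) := zpowers (a 1) with hA
  have hcardA : Nat.card A = 2 * n := by rw [hA, Nat.card_zpowers, orderOf_a_one]
  have hxa_nmem : ∀ i : ZMod (2*n), (xa i : QuaternionGroup n) ∉ A := by
    intro i hi
    rw [hA, ← mem_powers_iff_mem_zpowers] at hi
    obtain ⟨k, hk⟩ := hi
    change (a 1 : QuaternionGroup n) ^ k = xa i at hk
    rw [a_one_pow] at hk
    exact nomatch hk
  have hmemA : ∀ i : ZMod (2*n), (a i : QuaternionGroup n) ∈ A := by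
    intro i
    rw [hA, ← mem_powers_iff_mem_zpowers]
    refine ⟨i.val, ?_⟩
    change (a 1 : QuaternionGroup n) ^ i.val = a i
    rw [a_one_pow, ZMod.natCast_rightInverse i]
  haveI : Fintype A := Fintype.ofFinite _
  haveI : IsCyclic A := isCyclic_zpowers' _
  have huniq : ∀ H K : Subgroup (QuaternionGroup n), H ≤ A → K ≤ A →
      Nat.card H = Nat.card K → H = K := by
    intro H K hH hK hcard
    have h1 : Nat.card (H.subgroupOf A) = Nat.card (K.subgroupOf A) := by
      rw [Nat.card_congr (subgroupOfEquivOfLe hH).toEquiv,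
        Nat.card_congr (subgroupOfEquivOfLe hK).toEquiv, hcard]
    have h2 := subgroup_eq_of_card_eq' h1
    have h3 := congrArg (Subgroup.map A.subtype) h2
    rwa [subgroupOf_map_subtype, subgroupOf_map_subtype, inf_eq_left.mpr hH,
      inf_eq_left.mpr hK] at h3
  have horder : ∀ d : ℕ, d ∣ 2*n → orderOf ((a 1 : QuaternionGroup n) ^ (2*n / d)) = d := by
    intro d hd
    rw [orderOf_pow, orderOf_a_one, Nat.gcd_eq_right (Nat.div_dvd_of_dvd hd),
      Nat.div_div_self hd h2n0]
  have hgen : ∀ H : Subgroup (QuaternionGroup n), IsCyclic H →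
      ∃ g : QuaternionGroup n, H = zpowers g := by
    intro H hH
    obtain ⟨g, hg⟩ := hH.exists_generator
    refine ⟨(g : QuaternionGroup n), le_antisymm ?_ (zpowers_le.mpr g.2)⟩
    intro x hx
    obtain ⟨k, hk⟩ := mem_zpowers_iff.mp (hg ⟨x, hx⟩)
    exact mem_zpowers_iff.mpr ⟨k, by simpa using congrArg ((↑) : H → QuaternionGroup n) hk⟩
  let φ : ZMod (2*n) →+* ZMod n := ZMod.castHom ⟨2, by ring⟩ (ZMod n)
  let Fn : ({d // d ∈ (2*n).divisors} ⊕ ZMod n) →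
      {H : Subgroup (QuaternionGroup n) // IsCyclic H} := fun t =>
    Sum.rec (fun d => ⟨zpowers ((a 1 : QuaternionGroup n) ^ (2*n / d.1)), isCyclic_zpowers' _⟩)
      (fun k => ⟨zpowers (xa ((k.val : ℕ) : ZMod (2*n))), isCyclic_zpowers' _⟩) t
  have hbij : Function.Bijective Fn := by
    constructor
    · rintro (⟨d, hd⟩ | k) (⟨e, he⟩ | l) h <;>
        simp only [Fn, Subtype.mk.injEq] at h
      · obtain ⟨hd1, -⟩ := Nat.mem_divisors.mp hd
        obtain ⟨he1, -⟩ := Nat.mem_divisors.mp he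
        have := congrArg (fun S : Subgroup (QuaternionGroup n) => Nat.card S) h
        simp only [Nat.card_zpowers, horder d hd1, horder e he1] at this
        exact congrArg Sum.inl (Subtype.ext this)
      · exfalso
        have hx : (xa ((l.val : ℕ) : ZMod (2*n)) : QuaternionGroup n) ∈ A := by
          have hm := mem_zpowers (xa ((l.val : ℕ) : ZMod (2*n)) : QuaternionGroup n)
          rw [← h] at hm
          exact zpowers_le.mpr (pow_mem (mem_zpowers _) _) hm
        exact hxa_nmem _ hx
      · exfalso
        have hx : (xa ((k.val : ℕ) : ZMod (2*n)) : QuaternionGroup n) ∈ A := by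
          have hm := mem_zpowers (xa ((k.val : ℕ) : ZMod (2*n)) : QuaternionGroup n)
          rw [h] at hm
          exact zpowers_le.mpr (pow_mem (mem_zpowers _) _) hm
        exact hxa_nmem _ hx
      · have hm : (xa ((k.val : ℕ) : ZMod (2*n)) : QuaternionGroup n) ∈
            zpowers (xa ((l.val : ℕ) : ZMod (2*n)) : QuaternionGroup n) := by
          rw [← h]; exact mem_zpowers _
        have hkl := xa_mem_zpowers_xa' hm
        have hφk : φ ((k.val : ℕ) : ZMod (2*n)) = k := by
          rw [map_natCast]; exact ZMod.natCast_rightInverse k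
        have hφl : φ ((l.val : ℕ) : ZMod (2*n)) = l := by
          rw [map_natCast]; exact ZMod.natCast_rightInverse l
        have hk_eq_l : k = l := by
          rcases hkl with h' | h'
          · rw [← hφk, h', hφl]
          · rw [← hφk, h', map_sub, hφl, map_natCast, ZMod.natCast_self, sub_zero]
        exact congrArg Sum.inr hk_eq_l
    · rintro ⟨H, hH⟩
      obtain ⟨g, rfl⟩ := hgen H hH
      rcases g with i | i
      · have hle : zpowers (a i : QuaternionGroup n) ≤ A := zpowers_le.mpr (hmemA i)
        have hdvd : Nat.card (zpowers (a i : QuaternionGroup n)) ∣ 2*n :=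
          hcardA ▸ card_dvd_of_le hle
        refine ⟨Sum.inl ⟨Nat.card (zpowers (a i : QuaternionGroup n)),
          Nat.mem_divisors.mpr ⟨hdvd, h2n0⟩⟩, Subtype.ext ?_⟩
        apply huniq _ _ (zpowers_le.mpr (pow_mem (mem_zpowers _) _)) hle
        rw [Nat.card_zpowers, horder _ hdvd]
      · refine ⟨Sum.inr (φ i), Subtype.ext ?_⟩
        show zpowers (xa (((φ i).val : ℕ) : ZMod (2*n)) : QuaternionGroup n) = zpowers (xa i)
        have hval2 : ((i.val : ℕ) : ZMod (2*n)) = i := ZMod.natCast_rightInverse i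
        have hφi : φ i = ((i.val : ℕ) : ZMod n) := by
          conv_lhs => rw [← hval2]
          rw [map_natCast]
        have hvφ : (φ i).val = i.val % n := by rw [hφi, ZMod.val_natCast]
        rcases Nat.lt_or_ge i.val n with hlt | hge
        · have : (φ i).val = i.val := by rw [hvφ, Nat.mod_eq_of_lt hlt]
          rw [this, hval2]
        · have hmod : (φ i).val = i.val - n := by
            rw [hvφ, Nat.mod_eq_sub_mod hge, Nat.mod_eq_of_lt]
            have := ZMod.val_lt i
            omega
          have : (((φ i).val : ℕ) : ZMod (2*n)) = i - (n : ZMod (2*n)) := by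
            rw [hmod, Nat.cast_sub hge, hval2]
          rw [this, zpowers_xa_sub_n]
  calc Nat.card {H : Subgroup (QuaternionGroup n) // IsCyclic H}
      = Nat.card ({d // d ∈ (2*n).divisors} ⊕ ZMod n) :=
        (Nat.card_congr (Equiv.ofBijective Fn hbij)).symm
    _ = (2 * n).divisors.card + n := by
        rw [Nat.card_sum, Nat.card_zmod, Nat.card_eq_fintype_card]
        congr 1
        exact Fintype.card_coe _
end

section
/- Let n ≥ 1, let i be a positive divisor of n, and let j be any integer. Then the subgroup of the dicyclic group T_{4n} generated by the two elements αⁱ and α^{j}β has order 4n/i. -/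
open QuaternionGroup

variable {n : ℕ}

lemma a_inv' (c : ZMod (2 * n)) :
    (QuaternionGroup.a c : QuaternionGroup n)⁻¹ = QuaternionGroup.a (-c) := by
  rw [inv_eq_iff_mul_eq_one, a_mul_a, add_neg_cancel, one_def]

lemma a_zpow (c : ZMod (2 * n)) (m : ℤ) :
    (QuaternionGroup.a c : QuaternionGroup n) ^ m = QuaternionGroup.a (m • c) := by
  induction m using Int.induction_on with
  | zero => rw [zpow_zero, zero_smul, one_def]
  | succ k ih =>
    rw [zpow_add_one, ih, a_mul_a]
    congr 1
    rw [add_smul, one_smul]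
  | pred k ih =>
    rw [zpow_sub_one, ih, a_inv', a_mul_a]
    congr 1
    rw [sub_smul, one_smul, sub_eq_add_neg]

/-- the subgroup `⟨a^i⟩ ∪ ⟨a^i⟩ * xa j` -/
def mySub (n : ℕ) (j : ZMod (2 * n)) (I : AddSubgroup (ZMod (2 * n)))
    (hnI : (n : ZMod (2 * n)) ∈ I) : Subgroup (QuaternionGroup n) where
  carrier := {x | match x with
    | .a k => k ∈ I
    | .xa k => k - j ∈ I}
  one_mem' := by show (0 : ZMod (2 * n)) ∈ I; exact I.zero_mem
  mul_mem' := by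
    rintro (k | k) (l | l) hk hl
    · simpa using I.add_mem hk hl
    · show l - k - j ∈ I
      have := I.sub_mem hl hk
      convert this using 1; ring
    · show k + l - j ∈ I
      have := I.add_mem hk hl
      convert this using 1; ring
    · show (n : ZMod (2*n)) + l - k ∈ I
      have := I.add_mem hnI (I.sub_mem hl hk)
      convert this using 1; ring
  inv_mem' := by
    rintro (k | k) hk
    · show -k ∈ I
      exact I.neg_mem hk
    · show (n : ZMod (2*n)) + k - j ∈ I
      have := I.add_mem hnI hk
      convert this using 1; ring

/-- counting bijection -/
def myEquiv (n : ℕ) (j : ZMod (2 * n)) (I : AddSubgroup (ZMod (2 * n)))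
    (hnI : (n : ZMod (2 * n)) ∈ I) : (I ⊕ I) ≃ (mySub n j I hnI) where
  toFun x := match x with
    | Sum.inl ⟨k, hk⟩ => ⟨.a k, hk⟩
    | Sum.inr ⟨k, hk⟩ => ⟨.xa (k + j), by show k + j - j ∈ I; simpa using hk⟩
  invFun x := match x with
    | ⟨.a k, hk⟩ => Sum.inl ⟨k, hk⟩
    | ⟨.xa k, hk⟩ => Sum.inr ⟨k - j, hk⟩
  left_inv := by rintro (⟨k, hk⟩ | ⟨k, hk⟩) <;> simp
  right_inv := by rintro ⟨(k | k), hk⟩ <;> simp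

/-- For `i` a positive divisor of `n` and any integer `j`, the subgroup of the dicyclic
group `T_{4n}` generated by `αⁱ` and `α^j β` has order `4n/i`. -/
theorem card_subgroup_closure_a_pow_xa (n i : ℕ) (hn : 1 ≤ n) (hi : i ∣ n)
    (hipos : 0 < i) (j : ℤ) :
    Nat.card (Subgroup.closure
        ({(QuaternionGroup.a 1 : QuaternionGroup n) ^ i,
          QuaternionGroup.xa (j : ZMod (2 * n))} : Set (QuaternionGroup n))) =
      4 * n / i := by
  haveI : NeZero n := ⟨by omega⟩
  set I : AddSubgroup (ZMod (2 * n)) := AddSubgroup.zmultiples (i : ZMod (2 * n)) with hI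
  obtain ⟨m, hm⟩ := id hi
  have hnI : (n : ZMod (2 * n)) ∈ I := by
    refine ⟨(m : ℤ), ?_⟩
    show (m : ℤ) • (i : ZMod (2 * n)) = n
    rw [zsmul_eq_mul, hm]
    push_cast
    ring
  have hkey : Subgroup.closure
      ({(QuaternionGroup.a 1 : QuaternionGroup n) ^ i,
        QuaternionGroup.xa (j : ZMod (2 * n))} : Set (QuaternionGroup n)) = mySub n j I hnI := by
    apply le_antisymm
    · rw [Subgroup.closure_le]
      rintro x (rfl | rfl)
      · rw [a_one_pow]
        show (i : ZMod (2 * n)) ∈ I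
        exact AddSubgroup.mem_zmultiples _
      · show (j : ZMod (2*n)) - j ∈ I
        simpa using I.zero_mem
    · rintro (k | k) hk
      · obtain ⟨mk, hmk⟩ := hk
        have hmk' : mk • (i : ZMod (2 * n)) = k := hmk
        have : QuaternionGroup.a k = ((QuaternionGroup.a 1 : QuaternionGroup n) ^ i) ^ mk := by
          rw [a_one_pow, a_zpow, hmk']
        rw [this]
        exact zpow_mem (Subgroup.subset_closure (by simp)) mk
      · obtain ⟨mk, hmk⟩ : k - (j : ZMod (2 * n)) ∈ I := hk
        have hmk' : mk • (i : ZMod (2 * n)) = k - (j : ZMod (2 * n)) := hmk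
        have : QuaternionGroup.xa k =
            (QuaternionGroup.a ((j : ZMod (2 * n)) - k) : QuaternionGroup n) *
              QuaternionGroup.xa (j : ZMod (2*n)) := by
          rw [a_mul_xa]; congr 1; ring
        rw [this]
        refine mul_mem ?_ (Subgroup.subset_closure (by simp))
        have : QuaternionGroup.a ((j : ZMod (2 * n)) - k) =
            ((QuaternionGroup.a 1 : QuaternionGroup n) ^ i) ^ (-mk) := by
          rw [a_one_pow, a_zpow, neg_smul, hmk', neg_sub]
        rw [this]
        exact zpow_mem (Subgroup.subset_closure (by simp)) _
  rw [hkey]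
  have hcard : Nat.card (mySub n j I hnI) = 2 * Nat.card I := by
    rw [Nat.card_eq_of_bijective _ (myEquiv n j I hnI).symm.bijective, Nat.card_sum]
    omega
  rw [hcard]
  have hcardI : Nat.card I = 2 * n / i := by
    rw [hI, Nat.card_zmultiples, ZMod.addOrderOf_coe _ (by omega : 2 * n ≠ 0),
      Nat.gcd_eq_right (hi.mul_left 2)]
  rw [hcardI]
  rw [show 4 * n = 2 * (2 * n) by ring, Nat.mul_div_assoc 2 (hi.mul_left 2)]
end

section
/- Let n ≥ 1, let p be an odd prime with p ∤ n, let i be a positive divisor of n, and let j be any integer. In the direct product T_{4n} × C_p, with γ a generator of the C_p factor, the subgroup generated by the three elements (αⁱ, 1), (α^{j}β, 1), and (1, γ) has order 4np/i. -/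
open QuaternionGroup

private lemma a_one_zpow' (n : ℕ) (k : ℤ) :
    (QuaternionGroup.a 1 : QuaternionGroup n) ^ k = QuaternionGroup.a (k : ZMod (2 * n)) := by
  induction k using Int.induction_on with
  | zero => simp
  | succ k ih =>
      rw [zpow_add_one, ih, a_mul_a]
      push_cast; ring_nf
  | pred k ih =>
      rw [zpow_sub_one, ih]
      have h1 : (QuaternionGroup.a 1 : QuaternionGroup n)⁻¹ = QuaternionGroup.a (-1) := by
        rw [eq_comm, eq_inv_iff_mul_eq_one, a_mul_a, one_def]
        norm_num
      rw [h1, a_mul_a]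
      push_cast; ring_nf

/-- The explicit subgroup `⟨a^i, xa j⟩` of the quaternion group. -/
private def Hsub (n i : ℕ) (j : ℤ) (hi : i ∣ n) : Subgroup (QuaternionGroup n) where
  carrier := {x | (∃ k : ℤ, x = QuaternionGroup.a (((i : ℤ) * k : ℤ) : ZMod (2 * n))) ∨
      (∃ k : ℤ, x = QuaternionGroup.xa ((j + (i : ℤ) * k : ℤ) : ZMod (2 * n)))}
  one_mem' := Or.inl ⟨0, by simp⟩
  mul_mem' := by
    obtain ⟨c, hc⟩ := hi
    rintro x y (⟨k, rfl⟩ | ⟨k, rfl⟩) (⟨l, rfl⟩ | ⟨l, rfl⟩)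
    · exact Or.inl ⟨k + l, by rw [a_mul_a]; push_cast; ring_nf⟩
    · exact Or.inr ⟨l - k, by rw [a_mul_xa]; push_cast; ring_nf⟩
    · exact Or.inr ⟨k + l, by rw [xa_mul_a]; push_cast; ring_nf⟩
    · refine Or.inl ⟨(c : ℤ) + l - k, ?_⟩
      rw [xa_mul_xa]
      have : ((n : ℕ) : ZMod (2 * n)) = (((i * c : ℕ) : ℤ) : ZMod (2 * n)) := by
        rw [← hc]; push_cast; ring
      rw [this]; push_cast; ring_nf
  inv_mem' := by
    obtain ⟨c, hc⟩ := hi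
    rintro x (⟨k, rfl⟩ | ⟨k, rfl⟩)
    · refine Or.inl ⟨-k, ?_⟩
      rw [eq_comm, eq_inv_iff_mul_eq_one, a_mul_a, one_def]
      congr 1; push_cast; ring
    · refine Or.inr ⟨k + c, ?_⟩
      rw [eq_comm, eq_inv_iff_mul_eq_one, xa_mul_xa, one_def]
      congr 1
      have : ((n : ℕ) : ZMod (2 * n)) = (((i * c : ℕ) : ℤ) : ZMod (2 * n)) := by
        rw [← hc]; push_cast; ring
      rw [this]; push_cast; ring

private lemma closure_eq_Hsub (n i : ℕ) (j : ℤ) (hi : i ∣ n) :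
    Subgroup.closure {(QuaternionGroup.a 1 : QuaternionGroup n) ^ i,
      QuaternionGroup.xa (j : ZMod (2 * n))} = Hsub n i j hi := by
  apply le_antisymm
  · rw [Subgroup.closure_le]
    rintro x (rfl | rfl)
    · exact Or.inl ⟨1, by rw [← zpow_natCast, a_one_zpow']; push_cast; ring_nf⟩
    · exact Or.inr ⟨0, by norm_num⟩
  · rintro x (⟨k, rfl⟩ | ⟨k, rfl⟩)
    · have h1 : QuaternionGroup.a (((i : ℤ) * k : ℤ) : ZMod (2 * n)) =
          ((QuaternionGroup.a 1 : QuaternionGroup n) ^ i) ^ k := by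
        rw [← zpow_natCast, ← zpow_mul, a_one_zpow']
      rw [h1]
      exact zpow_mem (Subgroup.subset_closure (by simp)) k
    · have h1 : QuaternionGroup.xa ((j + (i : ℤ) * k : ℤ) : ZMod (2 * n)) =
          QuaternionGroup.xa (j : ZMod (2 * n)) *
            ((QuaternionGroup.a 1 : QuaternionGroup n) ^ i) ^ k := by
        rw [← zpow_natCast, ← zpow_mul, a_one_zpow', xa_mul_a]
        push_cast; ring_nf
      rw [h1]
      exact mul_mem (Subgroup.subset_closure (by simp))
        (zpow_mem (Subgroup.subset_closure (by simp)) k)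

private lemma card_Hsub (n i : ℕ) (j : ℤ) (hn : 1 ≤ n) (hi : i ∣ n) (hipos : 0 < i) :
    Nat.card (Hsub n i j hi) = 4 * n / i := by
  have hnz : NeZero n := ⟨by omega⟩
  have h2n : 2 * n ≠ 0 := by omega
  set A : Set (ZMod (2 * n)) := Set.range (fun k : ℤ => (((i : ℤ) * k : ℤ) : ZMod (2 * n)))
    with hA
  have hAcard : Nat.card A = 2 * n / i := by
    have hAeq : A = (AddSubgroup.zmultiples ((i : ℕ) : ZMod (2 * n)) : Set (ZMod (2 * n))) := by
      ext x
      constructor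
      · rintro ⟨k, rfl⟩
        refine ⟨k, ?_⟩
        simp only [zsmul_eq_mul]
        push_cast; ring
      · rintro ⟨k, rfl⟩
        refine ⟨k, ?_⟩
        simp only [zsmul_eq_mul]
        push_cast; ring
    rw [hAeq, SetLike.coe_sort_coe, Nat.card_zmultiples, ZMod.addOrderOf_coe i h2n]
    have hgcd : (2 * n).gcd i = i := Nat.gcd_eq_right (hi.mul_left 2)
    rw [hgcd]
  have hcarrier : (Hsub n i j hi : Set (QuaternionGroup n)) =
      (QuaternionGroup.a '' A) ∪
        (QuaternionGroup.xa '' ((fun x => ((j : ZMod (2 * n)) + x)) '' A)) := by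
    ext x
    constructor
    · rintro (⟨k, rfl⟩ | ⟨k, rfl⟩)
      · exact Or.inl ⟨_, ⟨k, rfl⟩, rfl⟩
      · refine Or.inr ⟨_, ⟨_, ⟨k, rfl⟩, rfl⟩, ?_⟩
        congr 1
        push_cast; ring
    · rintro (⟨_, ⟨k, rfl⟩, rfl⟩ | ⟨_, ⟨_, ⟨k, rfl⟩, rfl⟩, rfl⟩)
      · exact Or.inl ⟨k, rfl⟩
      · refine Or.inr ⟨k, ?_⟩
        congr 1
        push_cast; ring
  have hinj_a : Function.Injective (QuaternionGroup.a (n := n)) := fun x y h => by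
    injection h
  have hinj_xa : Function.Injective (QuaternionGroup.xa (n := n)) := fun x y h => by
    injection h
  have hdisj : Disjoint (QuaternionGroup.a '' A)
      (QuaternionGroup.xa '' ((fun x => ((j : ZMod (2 * n)) + x)) '' A)) := by
    rw [Set.disjoint_left]
    rintro x ⟨u, _, rfl⟩ ⟨v, _, h⟩
    cases h
  rw [← SetLike.coe_sort_coe, hcarrier, Nat.card_coe_set_eq,
    Set.ncard_union_eq hdisj (Set.toFinite _) (Set.toFinite _),
    Set.ncard_image_of_injective _ hinj_a, Set.ncard_image_of_injective _ hinj_xa,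
    Set.ncard_image_of_injective _ (add_right_injective _),
    ← Nat.card_coe_set_eq, hAcard]
  obtain ⟨c, rfl⟩ := hi
  rw [show 2 * (i * c) = i * (2 * c) by ring, show 4 * (i * c) = i * (4 * c) by ring,
    Nat.mul_div_cancel_left _ hipos, Nat.mul_div_cancel_left _ hipos]
  omega

/-- For `i` a positive divisor of `n` and any integer `j`, in `T_{4n} × C_p` the
subgroup generated by `(αⁱ, 1)`, `(α^j β, 1)` and `(1, γ)` has order `4np/i`. -/
theorem card_subgroup_closure_a_pow_xa_gamma (n p i : ℕ) (hn : 1 ≤ n)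
    (hp : p.Prime) (hodd : Odd p) (hpn : ¬ p ∣ n) (hi : i ∣ n) (hipos : 0 < i)
    (j : ℤ) :
    Nat.card (Subgroup.closure
        ({((QuaternionGroup.a 1 : QuaternionGroup n) ^ i, 1),
          (QuaternionGroup.xa (j : ZMod (2 * n)), 1),
          (1, Multiplicative.ofAdd (1 : ZMod p))} :
            Set (QuaternionGroup n × Multiplicative (ZMod p)))) = 4 * n * p / i := by
  have hnz : NeZero n := ⟨by omega⟩
  have hpz : NeZero p := ⟨hp.pos.ne'⟩
  have hclosure : Subgroup.closure
      ({((QuaternionGroup.a 1 : QuaternionGroup n) ^ i, 1),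
        (QuaternionGroup.xa (j : ZMod (2 * n)), 1),
        (1, Multiplicative.ofAdd (1 : ZMod p))} :
          Set (QuaternionGroup n × Multiplicative (ZMod p))) =
      (Hsub n i j hi).prod ⊤ := by
    apply le_antisymm
    · rw [Subgroup.closure_le]
      rintro x (rfl | rfl | rfl)
      · refine Subgroup.mem_prod.mpr ⟨?_, trivial⟩
        rw [← closure_eq_Hsub n i j hi]
        exact Subgroup.subset_closure (by simp)
      · refine Subgroup.mem_prod.mpr ⟨?_, trivial⟩
        rw [← closure_eq_Hsub n i j hi]
        exact Subgroup.subset_closure (by simp)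
      · exact Subgroup.mem_prod.mpr ⟨one_mem _, trivial⟩
    · rintro ⟨x, y⟩ hxy
      rw [Subgroup.mem_prod] at hxy
      have hx : (x, (1 : Multiplicative (ZMod p))) ∈ Subgroup.closure
          ({((QuaternionGroup.a 1 : QuaternionGroup n) ^ i, 1),
            (QuaternionGroup.xa (j : ZMod (2 * n)), 1),
            (1, Multiplicative.ofAdd (1 : ZMod p))} :
              Set (QuaternionGroup n × Multiplicative (ZMod p))) := by
        have hle : Hsub n i j hi ≤ (Subgroup.closure
            ({((QuaternionGroup.a 1 : QuaternionGroup n) ^ i, 1),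
              (QuaternionGroup.xa (j : ZMod (2 * n)), 1),
              (1, Multiplicative.ofAdd (1 : ZMod p))} :
                Set (QuaternionGroup n × Multiplicative (ZMod p)))).comap
            (MonoidHom.inl (QuaternionGroup n) (Multiplicative (ZMod p))) := by
          rw [← closure_eq_Hsub n i j hi, Subgroup.closure_le]
          rintro g (rfl | rfl)
          · exact Subgroup.subset_closure (by simp)
          · exact Subgroup.subset_closure (by simp)
        exact hle hxy.1
      have hy : ((1 : QuaternionGroup n), y) ∈ Subgroup.closure
          ({((QuaternionGroup.a 1 : QuaternionGroup n) ^ i, 1),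
            (QuaternionGroup.xa (j : ZMod (2 * n)), 1),
            (1, Multiplicative.ofAdd (1 : ZMod p))} :
              Set (QuaternionGroup n × Multiplicative (ZMod p))) := by
        have h1 : ((1 : QuaternionGroup n), Multiplicative.ofAdd (1 : ZMod p)) ∈
            Subgroup.closure
              ({((QuaternionGroup.a 1 : QuaternionGroup n) ^ i, 1),
                (QuaternionGroup.xa (j : ZMod (2 * n)), 1),
                (1, Multiplicative.ofAdd (1 : ZMod p))} :
                  Set (QuaternionGroup n × Multiplicative (ZMod p))) :=
          Subgroup.subset_closure (by simp)
        have h2 : ((1 : QuaternionGroup n), y) =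
            ((1 : QuaternionGroup n), Multiplicative.ofAdd (1 : ZMod p)) ^
              (Multiplicative.toAdd y).val := by
          rw [Prod.pow_mk, one_pow]
          congr 1
          rw [← ofAdd_nsmul, nsmul_eq_mul, mul_one]
          simp [ZMod.natCast_val, ZMod.cast_id]
        rw [h2]
        exact pow_mem h1 _
      have h3 : (x, y) = (x, (1 : Multiplicative (ZMod p))) * ((1 : QuaternionGroup n), y) := by
        simp
      rw [h3]
      exact mul_mem hx hy
  rw [hclosure, Nat.card_congr (Subgroup.prodEquiv _ _).toEquiv, Nat.card_prod,
    Subgroup.card_top, card_Hsub n i j hn hi hipos]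
  have hcp : Nat.card (Multiplicative (ZMod p)) = p := by
    simp [Nat.card_eq_fintype_card, ZMod.card]
  rw [hcp]
  obtain ⟨c, rfl⟩ := hi
  rw [show 4 * (i * c) * p = i * (4 * c * p) by ring, show 4 * (i * c) = i * (4 * c) by ring,
    Nat.mul_div_cancel_left _ hipos, Nat.mul_div_cancel_left _ hipos]
end

section
/- Let p and q be distinct primes with p odd and p < q. Then the number of cyclic subgroups of the group T_{4q} × C_p of order 4pq equals 2(q + 4); equivalently, it equals 4pq − t where t = 2q(2p − 1) − 8. -/
open Subgroup

section General

variable {G : Type*} [Group G]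

lemma my_isCyclic_zpowers (g : G) : IsCyclic (Subgroup.zpowers g) := by
  constructor
  refine ⟨⟨g, Subgroup.mem_zpowers g⟩, ?_⟩
  rintro ⟨x, hx⟩
  obtain ⟨k, hk⟩ := Subgroup.mem_zpowers_iff.mp hx
  exact Subgroup.mem_zpowers_iff.mpr ⟨k, by ext; simpa using hk⟩

lemma my_isCyclic_iff (H : Subgroup G) : IsCyclic H ↔ ∃ g : G, H = Subgroup.zpowers g := by
  constructor
  · intro h
    obtain ⟨⟨g, hg⟩, hgen⟩ := h.exists_generator
    refine ⟨g, le_antisymm ?_ (Subgroup.zpowers_le.mpr hg)⟩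
    intro x hx
    obtain ⟨k, hk⟩ := Subgroup.mem_zpowers_iff.mp (hgen ⟨x, hx⟩)
    exact Subgroup.mem_zpowers_iff.mpr ⟨k, by simpa using congrArg Subtype.val hk⟩
  · rintro ⟨g, rfl⟩
    exact my_isCyclic_zpowers g

variable {A B : Type*} [Group A] [Group B]

lemma my_left_mem [Finite A] [Finite B] (hA : 1 < Nat.card A)
    (hco : (Nat.card A).Coprime (Nat.card B)) (H : Subgroup (A × B)) {a : A} {b : B}
    (h : (a, b) ∈ H) : (a, (1 : B)) ∈ H := by
  obtain ⟨m, -, hm⟩ := Nat.exists_mul_mod_eq_one_of_coprime hco.symm hA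
  have key := H.pow_mem h (Nat.card B * m)
  have h1 : ((a, b) : A × B) ^ (Nat.card B * m) = (a ^ (Nat.card B * m), b ^ (Nat.card B * m)) :=
    rfl
  have hb : b ^ (Nat.card B * m) = 1 := by
    rw [pow_mul, pow_card_eq_one', one_pow]
  have ha : a ^ (Nat.card B * m) = a := by
    conv_lhs => rw [← pow_mod_natCard a (Nat.card B * m)]
    rw [hm, pow_one]
  rwa [h1, hb, ha] at key

lemma my_right_mem [Finite A] [Finite B] (hB : 1 < Nat.card B)
    (hco : (Nat.card A).Coprime (Nat.card B)) (H : Subgroup (A × B)) {a : A} {b : B}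
    (h : (a, b) ∈ H) : ((1 : A), b) ∈ H := by
  obtain ⟨m, -, hm⟩ := Nat.exists_mul_mod_eq_one_of_coprime hco hB
  have key := H.pow_mem h (Nat.card A * m)
  have h1 : ((a, b) : A × B) ^ (Nat.card A * m) = (a ^ (Nat.card A * m), b ^ (Nat.card A * m)) :=
    rfl
  have ha : a ^ (Nat.card A * m) = 1 := by
    rw [pow_mul, pow_card_eq_one', one_pow]
  have hb : b ^ (Nat.card A * m) = b := by
    conv_lhs => rw [← pow_mod_natCard b (Nat.card A * m)]
    rw [hm, pow_one]
  rwa [h1, ha, hb] at key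

lemma my_prod_decomp [Finite A] [Finite B] (hA : 1 < Nat.card A) (hB : 1 < Nat.card B)
    (hco : (Nat.card A).Coprime (Nat.card B)) (H : Subgroup (A × B)) :
    H = (H.map (MonoidHom.fst A B)).prod (H.map (MonoidHom.snd A B)) := by
  apply le_antisymm
  · rintro ⟨x1, x2⟩ hx
    exact Subgroup.mem_prod.mpr ⟨⟨(x1, x2), hx, rfl⟩, ⟨(x1, x2), hx, rfl⟩⟩
  · rintro ⟨x1, x2⟩ hx
    rw [Subgroup.mem_prod] at hx
    obtain ⟨h1, h2⟩ := hx
    obtain ⟨⟨a1, b1⟩, hm1, he1⟩ := h1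
    obtain ⟨⟨a2, b2⟩, hm2, he2⟩ := h2
    simp only [MonoidHom.coe_fst] at he1
    simp only [MonoidHom.coe_snd] at he2
    subst he1; subst he2
    have k1 : ((a1, 1) : A × B) ∈ H := my_left_mem hA hco H hm1
    have k2 : ((1, b2) : A × B) ∈ H := my_right_mem hB hco H hm2
    have hmul := H.mul_mem k1 k2
    simpa using hmul

lemma my_map_fst_prod (S : Subgroup A) (T : Subgroup B) :
    (S.prod T).map (MonoidHom.fst A B) = S := by
  ext a
  simp only [Subgroup.mem_map, Subgroup.mem_prod, MonoidHom.coe_fst]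
  constructor
  · rintro ⟨⟨a', b'⟩, ⟨hs, _⟩, rfl⟩; exact hs
  · intro ha; exact ⟨(a, 1), ⟨ha, T.one_mem⟩, rfl⟩

lemma my_map_snd_prod (S : Subgroup A) (T : Subgroup B) :
    (S.prod T).map (MonoidHom.snd A B) = T := by
  ext b
  simp only [Subgroup.mem_map, Subgroup.mem_prod, MonoidHom.coe_snd]
  constructor
  · rintro ⟨⟨a', b'⟩, ⟨_, ht⟩, rfl⟩; exact ht
  · intro hb; exact ⟨(1, b), ⟨S.one_mem, hb⟩, rfl⟩

lemma my_isCyclic_prod [Finite A] [Finite B] [IsCyclic A] [IsCyclic B]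
    (hco : (Nat.card A).Coprime (Nat.card B)) : IsCyclic (A × B) := by
  obtain ⟨g, hg⟩ := IsCyclic.exists_generator (α := A)
  obtain ⟨g', hg'⟩ := IsCyclic.exists_generator (α := B)
  apply isCyclic_of_orderOf_eq_card ((g, g') : A × B)
  rw [Prod.orderOf_mk, orderOf_eq_card_of_forall_mem_zpowers hg,
    orderOf_eq_card_of_forall_mem_zpowers hg', Nat.card_prod, hco.lcm_eq_mul]

lemma my_card_cyclic_prod [Finite A] [Finite B] (hA : 1 < Nat.card A) (hB : 1 < Nat.card B)
    (hco : (Nat.card A).Coprime (Nat.card B)) :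
    Nat.card {H : Subgroup (A × B) // IsCyclic H} =
      Nat.card {S : Subgroup A // IsCyclic S} * Nat.card {T : Subgroup B // IsCyclic T} := by
  rw [← Nat.card_prod]
  apply Nat.card_congr
  have cyc_map : ∀ (H : Subgroup (A × B)) (f : (A × B) →* A), IsCyclic H → IsCyclic (H.map f) :=
    fun H f hH => isCyclic_of_surjective (f.subgroupMap H) (f.subgroupMap_surjective H)
  have cyc_map' : ∀ (H : Subgroup (A × B)) (f : (A × B) →* B), IsCyclic H → IsCyclic (H.map f) :=
    fun H f hH => isCyclic_of_surjective (f.subgroupMap H) (f.subgroupMap_surjective H)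
  refine
    { toFun := fun H => (⟨H.1.map (MonoidHom.fst A B), cyc_map H.1 _ H.2⟩,
        ⟨H.1.map (MonoidHom.snd A B), cyc_map' H.1 _ H.2⟩)
      invFun := fun ST => ⟨ST.1.1.prod ST.2.1, ?_⟩
      left_inv := ?_
      right_inv := ?_ }
  · -- cyclic of prod
    haveI h1 : IsCyclic ST.1.1 := ST.1.2
    haveI h2 : IsCyclic ST.2.1 := ST.2.2
    have e : (ST.1.1.prod ST.2.1) ≃* (ST.1.1 × ST.2.1) := Subgroup.prodEquiv _ _
    have hcop : (Nat.card ST.1.1).Coprime (Nat.card ST.2.1) :=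
      Nat.Coprime.coprime_dvd_left (Subgroup.card_subgroup_dvd_card ST.1.1)
        (Nat.Coprime.coprime_dvd_right (Subgroup.card_subgroup_dvd_card ST.2.1) hco)
    haveI : IsCyclic (ST.1.1 × ST.2.1) := my_isCyclic_prod hcop
    exact isCyclic_of_surjective e.symm e.symm.surjective
  · intro H
    exact Subtype.ext (my_prod_decomp hA hB hco H.1).symm
  · intro ST
    refine Prod.ext (Subtype.ext ?_) (Subtype.ext ?_)
    · exact my_map_fst_prod ST.1.1 ST.2.1
    · exact my_map_snd_prod ST.1.1 ST.2.1

end General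

lemma my_count_cyclic_prime (p : ℕ) (hp : p.Prime) :
    Nat.card {T : Subgroup (Multiplicative (ZMod p)) // IsCyclic T} = 2 := by
  haveI : Fact p.Prime := ⟨hp⟩
  haveI : NeZero p := ⟨hp.pos.ne'⟩
  have hcard : Nat.card (Multiplicative (ZMod p)) = p := by
    simp [Nat.card_eq_fintype_card]
  have hclass : ∀ H : Subgroup (Multiplicative (ZMod p)), H = ⊥ ∨ H = ⊤ := by
    intro H
    have hdvd : Nat.card H ∣ p := by
      simpa [hcard] using Subgroup.card_subgroup_dvd_card H
    rcases (Nat.Prime.eq_one_or_self_of_dvd hp _ hdvd) with h | h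
    · exact Or.inl (Subgroup.eq_bot_of_card_eq H h)
    · exact Or.inr (Subgroup.eq_top_of_card_eq H (h.trans hcard.symm))
  have e : {T : Subgroup (Multiplicative (ZMod p)) // IsCyclic T} ≃
      Subgroup (Multiplicative (ZMod p)) :=
    Equiv.subtypeUnivEquiv (fun H => Subgroup.isCyclic H)
  rw [Nat.card_congr e, Nat.card_eq_two_iff]
  refine ⟨⊥, ⊤, bot_ne_top, ?_⟩
  ext H
  rcases hclass H with h | h <;> simp [h]

section Quaternion

open QuaternionGroup

variable {q : ℕ}

lemma my_zpowers_a (hq : 0 < q) (i : ZMod (2 * q)) :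
    Subgroup.zpowers (a i : QuaternionGroup q) =
      Subgroup.zpowers (a ((Nat.gcd (2 * q) i.val : ℕ) : ZMod (2 * q))) := by
  haveI : NeZero q := ⟨hq.ne'⟩
  haveI : NeZero (2 * q) := ⟨by omega⟩
  by_cases h0 : i.val = 0
  · have hi0 : i = 0 := by
      rw [← ZMod.natCast_zmod_val i, h0]; simp
    subst hi0
    simp [ZMod.val_zero, Nat.gcd_zero_right, ZMod.natCast_self]
  · set m := Nat.gcd (2 * q) i.val with hm
    have hmdvd : m ∣ i.val := Nat.gcd_dvd_right _ _
    obtain ⟨c, hc⟩ := hmdvd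
    have hmlt : m < 2 * q := lt_of_le_of_lt (Nat.le_of_dvd (Nat.pos_of_ne_zero h0)
      (Nat.gcd_dvd_right _ _)) (ZMod.val_lt i)
    have hmval : ((m : ZMod (2 * q))).val = m := ZMod.val_cast_of_lt hmlt
    apply (Subgroup.eq_of_le_of_card_ge ?_ ?_)
    · rw [Subgroup.zpowers_le]
      have : (a ((m : ℕ) : ZMod (2 * q)) : QuaternionGroup q) ^ c = a i := by
        have e1 : (a ((m : ℕ) : ZMod (2 * q)) : QuaternionGroup q) = (a 1) ^ m :=
          (a_one_pow m).symm
        rw [e1, ← pow_mul, a_one_pow, ← hc, ZMod.natCast_zmod_val]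
      exact this ▸ Subgroup.pow_mem _ (Subgroup.mem_zpowers _) c
    · rw [Nat.card_zpowers, Nat.card_zpowers, orderOf_a, orderOf_a, hmval]
      have hg : (2 * q).gcd m = m := by
        rw [Nat.gcd_comm]
        exact Nat.gcd_eq_left (Nat.gcd_dvd_left (2 * q) i.val)
      rw [hg, hm]

lemma my_zpowers_xa (hq : 0 < q) (i : ZMod (2 * q)) :
    Subgroup.zpowers (xa i : QuaternionGroup q) =
      Subgroup.zpowers (xa (((i.val % q : ℕ) : ZMod (2 * q)))) := by
  haveI : NeZero q := ⟨hq.ne'⟩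
  haveI : NeZero (2 * q) := ⟨by omega⟩
  have hival : i.val < 2 * q := ZMod.val_lt i
  set j := i.val % q with hj
  have hiv : i = ((i.val : ℕ) : ZMod (2 * q)) := (ZMod.natCast_zmod_val i).symm
  apply Subgroup.eq_of_le_of_card_ge
  · rw [Subgroup.zpowers_le]
    rcases lt_or_ge i.val q with h | h
    · have : j = i.val := Nat.mod_eq_of_lt h
      rw [this, ← hiv]
      exact Subgroup.mem_zpowers _
    · have hj2 : j = i.val - q := by
        rw [hj, Nat.mod_eq_sub_mod h, Nat.mod_eq_of_lt (by omega)]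
      have hsum : j + q = i.val := by omega
      have key : (xa ((j : ℕ) : ZMod (2 * q)) : QuaternionGroup q) ^ 3 = xa i := by
        have e2 : (xa ((j : ℕ) : ZMod (2 * q)) : QuaternionGroup q) ^ 3 =
            (xa ((j : ℕ) : ZMod (2 * q))) ^ 2 * xa ((j : ℕ) : ZMod (2 * q)) := pow_succ _ 2
        rw [e2, xa_sq, a_mul_xa]
        congr 1
        have h2q : ((q : ℕ) : ZMod (2 * q)) + ((q : ℕ) : ZMod (2 * q)) = 0 := by
          rw [← Nat.cast_add]
          have : ((2 * q : ℕ) : ZMod (2 * q)) = 0 := ZMod.natCast_self _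
          rw [← this]; congr 1; omega
        have hneg : -((q : ℕ) : ZMod (2 * q)) = ((q : ℕ) : ZMod (2 * q)) := by
          rw [neg_eq_iff_add_eq_zero]; exact h2q
        rw [hiv, ← hsum, sub_eq_add_neg, hneg]
        push_cast
        ring
      rw [← key]
      exact Subgroup.pow_mem _ (Subgroup.mem_zpowers _) 3
  · rw [Nat.card_zpowers, Nat.card_zpowers, orderOf_xa, orderOf_xa]

end Quaternion

section QuaternionCount

open QuaternionGroup

lemma my_neg_q (q : ℕ) : -((q : ℕ) : ZMod (2 * q)) = ((q : ℕ) : ZMod (2 * q)) := by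
  rw [neg_eq_iff_add_eq_zero, ← Nat.cast_add]
  have h : q + q = 2 * q := by ring
  rw [h, ZMod.natCast_self]

lemma my_xa_cube {q : ℕ} (t : ZMod (2 * q)) :
    (xa t : QuaternionGroup q) ^ 3 = xa (t - ((q : ℕ) : ZMod (2 * q))) := by
  rw [pow_succ, xa_sq, a_mul_xa]

lemma my_div4 {q : ℕ} (hq : q.Prime) (m : ℕ) (hm : m ∣ 2 * q) :
    m = 1 ∨ m = 2 ∨ m = q ∨ m = 2 * q := by
  by_cases hdq : q ∣ m
  · obtain ⟨e, rfl⟩ := hdq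
    have h2 : 2 * q = q * 2 := by ring
    rw [h2] at hm
    have he : e ∣ 2 := (Nat.mul_dvd_mul_iff_left hq.pos).mp hm
    rcases (Nat.dvd_prime Nat.prime_two).mp he with rfl | rfl
    · right; right; left; ring
    · right; right; right; ring
  · have hco : Nat.Coprime m q := ((Nat.Prime.coprime_iff_not_dvd hq).mpr hdq).symm
    have h2 : m ∣ 2 := by
      have h2' : 2 * q = 2 * q := rfl
      exact Nat.Coprime.dvd_of_dvd_mul_right hco hm
    rcases (Nat.dvd_prime Nat.prime_two).mp h2 with rfl | rfl
    · left; rfl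
    · right; left; rfl

lemma my_xa_inj {q : ℕ} (hq : q.Prime) {i j : ℕ} (hi : i < q) (hj : j < q)
    (h : Subgroup.zpowers (xa ((i : ℕ) : ZMod (2 * q)) : QuaternionGroup q) =
      Subgroup.zpowers (xa ((j : ℕ) : ZMod (2 * q)))) : i = j := by
  haveI : NeZero q := ⟨hq.pos.ne'⟩
  have hmem : (xa ((i : ℕ) : ZMod (2 * q)) : QuaternionGroup q) ∈
      Subgroup.zpowers (xa ((j : ℕ) : ZMod (2 * q))) := h ▸ Subgroup.mem_zpowers _
  obtain ⟨k, hk⟩ := Subgroup.mem_zpowers_iff.mp hmem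
  rw [← zpow_mod_orderOf, orderOf_xa] at hk
  have hiv : ((i : ℕ) : ZMod (2 * q)).val = i := ZMod.val_cast_of_lt (by omega)
  have hjv : ((j : ℕ) : ZMod (2 * q)).val = j := ZMod.val_cast_of_lt (by omega)
  have hcases : k % ((4 : ℕ) : ℤ) = 0 ∨ k % ((4 : ℕ) : ℤ) = 1 ∨ k % ((4 : ℕ) : ℤ) = 2 ∨
      k % ((4 : ℕ) : ℤ) = 3 := by omega
  rcases hcases with hc | hc | hc | hc <;> rw [hc] at hk
  · rw [zpow_zero] at hk
    rw [QuaternionGroup.one_def] at hk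
    cases hk
  · rw [zpow_one] at hk
    have := congrArg ZMod.val (xa.inj hk)
    rw [hiv, hjv] at this
    omega
  · rw [show (2 : ℤ) = ((2 : ℕ) : ℤ) by norm_num, zpow_natCast, xa_sq] at hk
    simp at hk
  · rw [show (3 : ℤ) = ((3 : ℕ) : ℤ) by norm_num, zpow_natCast, my_xa_cube,
      sub_eq_add_neg, my_neg_q, ← Nat.cast_add] at hk
    have := congrArg ZMod.val (xa.inj hk)
    rw [hiv, ZMod.val_cast_of_lt (show j + q < 2 * q by omega)] at this
    omega

lemma my_count_quaternion (q : ℕ) (hq : q.Prime) (hodd : Odd q) :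
    Nat.card {S : Subgroup (QuaternionGroup q) // IsCyclic S} = q + 4 := by
  classical
  haveI : NeZero q := ⟨hq.pos.ne'⟩
  haveI : NeZero (2 * q) := ⟨by have := hq.pos; omega⟩
  have hq2 : q % 2 = 1 := Nat.odd_iff.mp hodd
  have hq3 : 3 ≤ q := by
    have := hq.two_le; omega
  -- canonical subgroups
  set S2 : Subgroup (QuaternionGroup q) := Subgroup.zpowers (a ((q : ℕ) : ZMod (2 * q))) with hS2
  set Sq : Subgroup (QuaternionGroup q) := Subgroup.zpowers (a ((2 : ℕ) : ZMod (2 * q))) with hSq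
  set S2q : Subgroup (QuaternionGroup q) := Subgroup.zpowers (a (1 : ZMod (2 * q))) with hS2q
  -- orders
  have hvq : ((q : ℕ) : ZMod (2 * q)).val = q := ZMod.val_cast_of_lt (by omega)
  have hv2 : ((2 : ℕ) : ZMod (2 * q)).val = 2 := ZMod.val_cast_of_lt (by omega)
  have ordq : orderOf (a ((q : ℕ) : ZMod (2 * q)) : QuaternionGroup q) = 2 := by
    rw [orderOf_a, hvq, Nat.gcd_comm, Nat.gcd_eq_left (dvd_mul_left q 2),
      Nat.mul_div_cancel _ hq.pos]
  have ord2 : orderOf (a ((2 : ℕ) : ZMod (2 * q)) : QuaternionGroup q) = q := by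
    rw [orderOf_a, hv2, Nat.gcd_comm, Nat.gcd_eq_left (dvd_mul_right 2 q),
      Nat.mul_div_cancel_left _ (by norm_num)]
  have c2 : Nat.card S2 = 2 := by rw [hS2, Nat.card_zpowers, ordq]
  have cq : Nat.card Sq = q := by rw [hSq, Nat.card_zpowers, ord2]
  have c2q : Nat.card S2q = 2 * q := by rw [hS2q, Nat.card_zpowers, orderOf_a_one]
  have cbot : Nat.card (⊥ : Subgroup (QuaternionGroup q)) = 1 := Subgroup.card_bot
  have cX : ∀ j : ℕ, Nat.card (Subgroup.zpowers (xa ((j : ℕ) : ZMod (2 * q)) :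
      QuaternionGroup q)) = 4 := fun j => by rw [Nat.card_zpowers, orderOf_xa]
  have hne : ∀ {S T : Subgroup (QuaternionGroup q)}, Nat.card S ≠ Nat.card T → S ≠ T :=
    fun h hST => h (by rw [hST])
  set F : Finset (Subgroup (QuaternionGroup q)) :=
    ({⊥, S2, Sq, S2q} : Finset _) ∪
      (Finset.range q).image (fun j => Subgroup.zpowers (xa ((j : ℕ) : ZMod (2 * q)))) with hF
  have hset : {S : Subgroup (QuaternionGroup q) | IsCyclic S} = ↑F := by
    ext S
    simp only [Set.mem_setOf_eq, hF, Finset.coe_union, Set.mem_union, Finset.coe_insert,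
      Set.mem_insert_iff, Finset.coe_singleton, Set.mem_singleton_iff, Finset.coe_image,
      Set.mem_image, Finset.coe_range, Set.mem_Iio]
    constructor
    · intro hS
      obtain ⟨g, rfl⟩ := (my_isCyclic_iff S).mp hS
      rcases g with i | i
      · rw [my_zpowers_a hq.pos i]
        rcases my_div4 hq _ (Nat.gcd_dvd_left (2 * q) i.val) with hm | hm | hm | hm <;>
          rw [hm]
        · left; right; right; right; rw [Nat.cast_one]
        · left; right; right; left; rfl
        · left; right; left; rfl
        · left; left
          rw [ZMod.natCast_self, show (a (0 : ZMod (2 * q)) : QuaternionGroup q) = 1 from rfl,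
            Subgroup.zpowers_one_eq_bot]
      · rw [my_zpowers_xa hq.pos i]
        right
        exact ⟨i.val % q, Nat.mod_lt _ hq.pos, rfl⟩
    · rintro (h | ⟨j, hj, rfl⟩)
      · rcases h with rfl | rfl | rfl | rfl
        · infer_instance
        · exact my_isCyclic_zpowers _
        · exact my_isCyclic_zpowers _
        · exact my_isCyclic_zpowers _
      · exact my_isCyclic_zpowers _
  have hcard : Nat.card {S : Subgroup (QuaternionGroup q) // IsCyclic S} = F.card := by
    rw [show {S : Subgroup (QuaternionGroup q) // IsCyclic S} =
      {S : Subgroup (QuaternionGroup q) // S ∈ {S : Subgroup (QuaternionGroup q) | IsCyclic S}}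
      from rfl, Nat.card_coe_set_eq, hset, Set.ncard_coe_finset]
  rw [hcard, hF]
  have hdisj : Disjoint ({⊥, S2, Sq, S2q} : Finset (Subgroup (QuaternionGroup q)))
      ((Finset.range q).image (fun j => Subgroup.zpowers (xa ((j : ℕ) : ZMod (2 * q))))) := by
    rw [Finset.disjoint_left]
    intro S hSA hSB
    obtain ⟨j, hj, rfl⟩ := Finset.mem_image.mp hSB
    have c4 := cX j
    simp only [Finset.mem_insert, Finset.mem_singleton] at hSA
    rcases hSA with h | h | h | h <;> rw [h] at c4 <;> omega
  rw [Finset.card_union_of_disjoint hdisj]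
  have hcA : ({⊥, S2, Sq, S2q} : Finset (Subgroup (QuaternionGroup q))).card = 4 := by
    rw [Finset.card_insert_of_notMem, Finset.card_insert_of_notMem,
      Finset.card_insert_of_notMem, Finset.card_singleton]
    · simp only [Finset.mem_singleton]
      exact hne (by omega)
    · simp only [Finset.mem_insert, Finset.mem_singleton]
      push_neg
      exact ⟨hne (by omega), hne (by omega)⟩
    · simp only [Finset.mem_insert, Finset.mem_singleton]
      push_neg
      exact ⟨hne (by omega), hne (by omega), hne (by omega)⟩
  have hcB : ((Finset.range q).image
      (fun j => Subgroup.zpowers (xa ((j : ℕ) : ZMod (2 * q)) : QuaternionGroup q))).card = q := by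
    rw [Finset.card_image_of_injOn, Finset.card_range]
    intro i hi j hj hij
    exact my_xa_inj hq (Finset.mem_range.mp hi) (Finset.mem_range.mp hj) hij
  rw [hcA, hcB]
  omega

end QuaternionCount

/-- For distinct primes `p < q` with `p` odd, the number of cyclic subgroups of
`T_{4q} × C_p` equals `2(q + 4) = 4pq − (2q(2p − 1) − 8)`. -/
theorem num_cyclic_subgroups_dicyclic_q_prod_cyclic (p q : ℕ) (hp : p.Prime)
    (hq : q.Prime) (hodd : Odd p) (hpq : p < q) :
    Nat.card {H : Subgroup (QuaternionGroup q × Multiplicative (ZMod p)) // IsCyclic H} =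
      2 * (q + 4) ∧
    Nat.card {H : Subgroup (QuaternionGroup q × Multiplicative (ZMod p)) // IsCyclic H} =
      4 * p * q - (2 * q * (2 * p - 1) - 8) := by
  haveI : Fact p.Prime := ⟨hp⟩
  haveI : NeZero p := ⟨hp.pos.ne'⟩
  haveI : NeZero q := ⟨hq.pos.ne'⟩
  have hp2 : p % 2 = 1 := Nat.odd_iff.mp hodd
  have hp3 : 3 ≤ p := by have := hp.two_le; omega
  have hq5 : 4 ≤ q := by omega
  have hqodd : Odd q := hq.odd_of_ne_two (by omega)
  have hA : Nat.card (QuaternionGroup q) = 4 * q := by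
    rw [Nat.card_eq_fintype_card, QuaternionGroup.card]
  have hB : Nat.card (Multiplicative (ZMod p)) = p := by
    simp [Nat.card_eq_fintype_card]
  have hnd : ¬ p ∣ 4 * q := by
    intro h
    rcases (Nat.Prime.dvd_mul hp).mp h with h4 | hdq
    · have h4' : p ∣ 2 ^ 2 := by norm_num; exact h4
      have := (Nat.prime_dvd_prime_iff_eq hp Nat.prime_two).mp (hp.dvd_of_dvd_pow h4')
      omega
    · have := (Nat.prime_dvd_prime_iff_eq hp hq).mp hdq
      omega
  have hco : (Nat.card (QuaternionGroup q)).Coprime (Nat.card (Multiplicative (ZMod p))) := by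
    rw [hA, hB]
    exact (hp.coprime_iff_not_dvd.mpr hnd).symm
  have key : Nat.card {H : Subgroup (QuaternionGroup q × Multiplicative (ZMod p)) //
      IsCyclic H} = 2 * (q + 4) := by
    rw [my_card_cyclic_prod (by omega) (by omega) hco, my_count_quaternion q hq hqodd,
      my_count_cyclic_prime p hp]
    ring
  refine ⟨key, ?_⟩
  rw [key]
  have e1 : 2 * q * (2 * p - 1) = 4 * p * q - 2 * q := by
    rw [Nat.mul_sub]
    ring_nf
  rw [e1]
  have e2 : 2 * q + 8 ≤ 4 * p * q := by nlinarith
  have e3 : 2 * q ≤ 4 * p * q := by nlinarith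
  omega
end
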